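/- arXiv:2411.14820 — 11 statements merged into one kernel-verified Lean document; each statement's English description precedes it below -/
import Mathlib

section
/- Let F be a field and K a field equipped with an F-algebra structure (a field extension of F). Let A and B be elements of SL(2,F). If there exists y ∈ GL(2,K) such that y · A · y⁻¹ = B, where A and B are viewed as matrices over K via the entrywise algebra map, then there exists g ∈ GL(2,F) such that g · A · g⁻¹ = B. (In SL(2,F), stable conjugacy — conjugacy over a field extension — coincides with ordinary conjugacy under GL(2,F).) -/
open Matrix

private lemma conj_of_aux {F : Type*} [Field F] (a b M : Matrix (Fin 2) (Fin 2) F)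
    (hM : IsUnit M.det) (h : M * a = b * M) :
    ∃ g : Matrix.GeneralLinearGroup (Fin 2) F,
      (↑g : Matrix (Fin 2) (Fin 2) F) * a * (↑(g⁻¹) : Matrix (Fin 2) (Fin 2) F) = b := by
  have hU : IsUnit M := (Matrix.isUnit_iff_isUnit_det M).mpr hM
  refine ⟨hU.unit, ?_⟩
  have h1 : (↑hU.unit : Matrix (Fin 2) (Fin 2) F) = M := hU.unit_spec
  have h2 : (↑hU.unit : Matrix (Fin 2) (Fin 2) F) * (↑(hU.unit⁻¹) : Matrix (Fin 2) (Fin 2) F) = 1 :=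
    hU.unit.mul_inv
  calc (↑hU.unit : Matrix (Fin 2) (Fin 2) F) * a * (↑(hU.unit⁻¹) : Matrix (Fin 2) (Fin 2) F)
      = (M * a) * (↑(hU.unit⁻¹) : Matrix (Fin 2) (Fin 2) F) := by rw [h1]
    _ = b * ((↑hU.unit : Matrix (Fin 2) (Fin 2) F) * (↑(hU.unit⁻¹) : Matrix (Fin 2) (Fin 2) F)) := by
        rw [h, h1, mul_assoc]
    _ = b := by rw [h2, mul_one]

/-- Any nonscalar 2×2 matrix of det 1 is conjugate to the companion matrix of its charpoly. -/
private lemma companion_aux {F : Type*} [Field F] (a : Matrix (Fin 2) (Fin 2) F)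
    (hdet : a.det = 1) (hns : ¬(a 0 1 = 0 ∧ a 1 0 = 0 ∧ a 0 0 = a 1 1)) :
    ∃ P : Matrix (Fin 2) (Fin 2) F, IsUnit P.det ∧
      a * P = P * !![0, -1; 1, a 0 0 + a 1 1] := by
  have hd : a 0 0 * a 1 1 - a 0 1 * a 1 0 = 1 := by
    rw [← Matrix.det_fin_two a]; exact hdet
  by_cases h10 : a 1 0 ≠ 0
  · refine ⟨!![1, a 0 0; 0, a 1 0], by simp [Matrix.det_fin_two_of, h10], ?_⟩
    ext i j
    fin_cases i <;> fin_cases j <;>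
      simp [Matrix.mul_apply, Fin.sum_univ_two] <;>
        first | ring1 | linear_combination hd | linear_combination -hd | linear_combination 2*hd | linear_combination (-2 : F)*hd
  · push_neg at h10
    by_cases h01 : a 0 1 ≠ 0
    · refine ⟨!![0, a 0 1; 1, a 1 1], by simp [Matrix.det_fin_two_of, h01], ?_⟩
      ext i j
      fin_cases i <;> fin_cases j <;>
        simp [Matrix.mul_apply, Fin.sum_univ_two] <;>
        first | ring1 | linear_combination hd | linear_combination -hd | linear_combination 2*hd | linear_combination (-2 : F)*hd
    · push_neg at h01
      have hne : a 0 0 ≠ a 1 1 := fun hc => hns ⟨h01, h10, hc⟩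
      refine ⟨!![1, a 0 0; 1, a 1 1], ?_, ?_⟩
      · simp [Matrix.det_fin_two_of]
        exact sub_ne_zero_of_ne hne.symm
      · rw [h01, zero_mul, sub_zero] at hd
        ext i j
        fin_cases i <;> fin_cases j <;>
          simp [Matrix.mul_apply, Fin.sum_univ_two, h01, h10] <;>
          first | ring1 | linear_combination hd | linear_combination -hd | linear_combination 2*hd | linear_combination (-2 : F)*hd

/-- In `SL(2,F)`, stable conjugacy (conjugacy over a field extension `K` of `F`)
coincides with ordinary conjugacy under `GL(2,F)`. -/
theorem stmt_0 (F K : Type*) [Field F] [Field K] [Algebra F K]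
    (A B : Matrix.SpecialLinearGroup (Fin 2) F)
    (h : ∃ y : Matrix.GeneralLinearGroup (Fin 2) K,
      (↑y : Matrix (Fin 2) (Fin 2) K) *
          ((↑A : Matrix (Fin 2) (Fin 2) F).map (algebraMap F K)) *
          (↑(y⁻¹) : Matrix (Fin 2) (Fin 2) K) =
        (↑B : Matrix (Fin 2) (Fin 2) F).map (algebraMap F K)) :
    ∃ g : Matrix.GeneralLinearGroup (Fin 2) F,
      (↑g : Matrix (Fin 2) (Fin 2) F) * (↑A : Matrix (Fin 2) (Fin 2) F) *
          (↑(g⁻¹) : Matrix (Fin 2) (Fin 2) F) =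
        (↑B : Matrix (Fin 2) (Fin 2) F) := by
  obtain ⟨y, hy⟩ := h
  set φ := algebraMap F K with hφ
  have hφi : Function.Injective φ := (algebraMap F K).injective
  set a : Matrix (Fin 2) (Fin 2) F := ↑A with ha
  set b : Matrix (Fin 2) (Fin 2) F := ↑B with hb
  have hyy : (↑y : Matrix (Fin 2) (Fin 2) K) * (↑(y⁻¹) : Matrix (Fin 2) (Fin 2) K) = 1 :=
    y.mul_inv
  have hyy' : (↑(y⁻¹) : Matrix (Fin 2) (Fin 2) K) * (↑y : Matrix (Fin 2) (Fin 2) K) = 1 :=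
    y.inv_mul
  -- scalar case helper
  have scalar_map : ∀ c : F, ((c • (1 : Matrix (Fin 2) (Fin 2) F)).map φ)
      = φ c • (1 : Matrix (Fin 2) (Fin 2) K) := by
    intro c
    ext i j
    by_cases hij : i = j <;> simp [Matrix.map_apply, Matrix.one_apply, hij]
  by_cases hs : a 0 1 = 0 ∧ a 1 0 = 0 ∧ a 0 0 = a 1 1
  · -- a is scalar
    have haval : a = a 0 0 • (1 : Matrix (Fin 2) (Fin 2) F) := by
      ext i j
      fin_cases i <;> fin_cases j <;>
        simp [Matrix.one_apply, hs.1, hs.2.1, hs.2.2]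
    have hcent : (↑y : Matrix (Fin 2) (Fin 2) K) * (a.map φ) * (↑(y⁻¹) : Matrix (Fin 2) (Fin 2) K)
        = a.map φ := by
      rw [haval, scalar_map, Matrix.mul_smul, mul_one, Matrix.smul_mul, hyy]
    have : b.map φ = a.map φ := by rw [← hy, hcent]
    have hab : b = a := Matrix.map_injective hφi this
    exact ⟨1, by simp [hab]⟩
  · -- nonscalar case
    -- b is also nonscalar
    have hbs : ¬(b 0 1 = 0 ∧ b 1 0 = 0 ∧ b 0 0 = b 1 1) := by
      intro hbsc
      have hbval : b = b 0 0 • (1 : Matrix (Fin 2) (Fin 2) F) := by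
        ext i j
        fin_cases i <;> fin_cases j <;>
          simp [Matrix.one_apply, hbsc.1, hbsc.2.1, hbsc.2.2]
      have h4 : (↑(y⁻¹) : Matrix (Fin 2) (Fin 2) K) * (b.map ⇑φ) * (↑y : Matrix (Fin 2) (Fin 2) K)
          = a.map ⇑φ := by
        rw [← hy]
        calc (↑(y⁻¹) : Matrix (Fin 2) (Fin 2) K) * ((↑y : Matrix (Fin 2) (Fin 2) K) * a.map ⇑φ *
                (↑(y⁻¹) : Matrix (Fin 2) (Fin 2) K)) * (↑y : Matrix (Fin 2) (Fin 2) K)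
            = ((↑(y⁻¹) : Matrix (Fin 2) (Fin 2) K) * (↑y : Matrix (Fin 2) (Fin 2) K)) * a.map ⇑φ *
                ((↑(y⁻¹) : Matrix (Fin 2) (Fin 2) K) * (↑y : Matrix (Fin 2) (Fin 2) K)) := by
              noncomm_ring
          _ = a.map ⇑φ := by rw [hyy']; simp
      have : a.map ⇑φ = b.map ⇑φ := by
        rw [← h4, hbval, scalar_map, Matrix.mul_smul, mul_one, Matrix.smul_mul, hyy']
      have hab : a = b := Matrix.map_injective hφi this
      exact hs (by rw [hab]; exact hbsc)
    -- traces are equal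
    have htr : a 0 0 + a 1 1 = b 0 0 + b 1 1 := by
      apply hφi
      have h1 : (b.map φ).trace = ((↑y : Matrix (Fin 2) (Fin 2) K) * (a.map φ) *
          (↑(y⁻¹) : Matrix (Fin 2) (Fin 2) K)).trace := by rw [hy]
      rw [Matrix.trace_mul_comm, ← mul_assoc, hyy', one_mul] at h1
      have h2 : (a.map φ).trace = φ (a 0 0) + φ (a 1 1) := by
        simp [Matrix.trace_fin_two, Matrix.map_apply]
      have h3 : (b.map φ).trace = φ (b 0 0) + φ (b 1 1) := by
        simp [Matrix.trace_fin_two, Matrix.map_apply]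
      rw [map_add, map_add, ← h2, ← h3, h1]
    obtain ⟨P, hP, hPa⟩ := companion_aux a A.2 hs
    obtain ⟨Q, hQ, hQb⟩ := companion_aux b B.2 hbs
    rw [← htr] at hQb
    set C : Matrix (Fin 2) (Fin 2) F := !![0, -1; 1, a 0 0 + a 1 1] with hC
    have haC : a = P * C * P⁻¹ := by
      rw [← hPa, mul_assoc, Matrix.mul_nonsing_inv P hP, mul_one]
    have hbCq : b = Q * C * Q⁻¹ := by
      rw [← hQb, mul_assoc, Matrix.mul_nonsing_inv Q hQ, mul_one]
    have hMdet : IsUnit (Q * P⁻¹).det := by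
      rw [Matrix.det_mul]
      exact hQ.mul (P.isUnit_nonsing_inv_det hP)
    have h1 : P⁻¹ * P = 1 := Matrix.nonsing_inv_mul P hP
    have h2 : Q⁻¹ * Q = 1 := Matrix.nonsing_inv_mul Q hQ
    have key : (Q * P⁻¹) * a = b * (Q * P⁻¹) := by
      rw [haC, hbCq]
      simp only [mul_assoc]
      rw [← mul_assoc P⁻¹ P, h1, one_mul, ← mul_assoc Q⁻¹ Q, h2, one_mul]
    exact conj_of_aux a b (Q * P⁻¹) hMdet key
end

section
/- Let F be a field and A ∈ SL(2,F) a non-scalar matrix with trace 𝔱. For every g ∈ GL(2,F), the matrix g · A · g⁻¹ is conjugate to A by an element of SL(2,F) if and only if there exist u, v ∈ F such that det g = u² + u·v·𝔱 + v². (The rational conjugacy classes inside the stable class of A are detected by the values of the norm form of the centralizer of A.) -/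
lemma cent2 {F : Type*} [Field F] (A B : Matrix (Fin 2) (Fin 2) F)
    (hA : ∀ c : F, A ≠ c • (1 : Matrix (Fin 2) (Fin 2) F)) (h : B * A = A * B) :
    ∃ u v : F, B = u • (1 : Matrix (Fin 2) (Fin 2) F) + v • A := by
  have e00 := congrFun (congrFun h 0) 0
  have e01 := congrFun (congrFun h 0) 1
  have e10 := congrFun (congrFun h 1) 0
  simp only [Matrix.mul_apply, Fin.sum_univ_two] at e00 e01 e10
  by_cases hb : A 0 1 ≠ 0
  · refine ⟨B 0 0 - (B 0 1 / A 0 1) * A 0 0, B 0 1 / A 0 1, ?_⟩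
    ext i j
    fin_cases i <;> fin_cases j <;> simp [Matrix.one_apply] <;> field_simp
    · linear_combination -e00
    · linear_combination -e01
  · by_cases hc : A 1 0 ≠ 0
    · refine ⟨B 0 0 - (B 1 0 / A 1 0) * A 0 0, B 1 0 / A 1 0, ?_⟩
      ext i j
      fin_cases i <;> fin_cases j <;> simp [Matrix.one_apply] <;> field_simp
      · linear_combination e00
      · linear_combination e10
    · push_neg at hb hc
      have had : A 0 0 ≠ A 1 1 := by
        intro h3
        apply hA (A 0 0)
        ext i j
        fin_cases i <;> fin_cases j <;> simp [Matrix.one_apply, hb, hc, h3]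
      rw [hb] at e01
      rw [hc] at e10
      have hq : B 0 1 = 0 := by
        rcases mul_eq_zero.1 (show B 0 1 * (A 1 1 - A 0 0) = 0 by linear_combination e01) with h' | h'
        · exact h'
        · exact absurd (sub_eq_zero.mp h').symm had
      have hr : B 1 0 = 0 := by
        rcases mul_eq_zero.1 (show B 1 0 * (A 0 0 - A 1 1) = 0 by linear_combination e10) with h' | h'
        · exact h'
        · exact absurd (sub_eq_zero.mp h') had
      have hsub : A 0 0 - A 1 1 ≠ 0 := sub_ne_zero.mpr had
      refine ⟨B 0 0 - ((B 0 0 - B 1 1) / (A 0 0 - A 1 1)) * A 0 0,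
        (B 0 0 - B 1 1) / (A 0 0 - A 1 1), ?_⟩
      ext i j
      fin_cases i <;> fin_cases j <;> simp [Matrix.one_apply, hq, hr, hb, hc] <;> field_simp <;> ring

lemma detc {F : Type*} [Field F] (A : Matrix (Fin 2) (Fin 2) F) (hdet : A.det = 1) (u v : F) :
    (u • (1 : Matrix (Fin 2) (Fin 2) F) + v • A).det = u ^ 2 + u * v * A.trace + v ^ 2 := by
  rw [Matrix.det_fin_two] at hdet ⊢
  rw [Matrix.trace_fin_two]
  simp [Matrix.one_apply]
  linear_combination (v ^ 2) * hdet

lemma invcomm {F : Type*} [Field F] (A X : Matrix (Fin 2) (Fin 2) F)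
    (h : X * A = A * X) (hX : IsUnit X.det) : X⁻¹ * A = A * X⁻¹ := by
  calc X⁻¹ * A = X⁻¹ * (A * X) * X⁻¹ := by
        rw [mul_assoc, mul_assoc, Matrix.mul_nonsing_inv _ hX, mul_one]
    _ = X⁻¹ * (X * A) * X⁻¹ := by rw [h]
    _ = A * X⁻¹ := by rw [← mul_assoc, Matrix.nonsing_inv_mul _ hX, one_mul]

lemma sl_inv_eq {F : Type*} [Field F] (h : Matrix.SpecialLinearGroup (Fin 2) F)
    (M' : Matrix (Fin 2) (Fin 2) F) (hr : (↑h : Matrix (Fin 2) (Fin 2) F) * M' = 1) :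
    (↑(h⁻¹) : Matrix (Fin 2) (Fin 2) F) = M' := by
  have hh1 : (↑(h⁻¹) : Matrix (Fin 2) (Fin 2) F) * (↑h : Matrix (Fin 2) (Fin 2) F) = 1 := by
    rw [← Matrix.SpecialLinearGroup.coe_mul, inv_mul_cancel, Matrix.SpecialLinearGroup.coe_one]
  calc (↑(h⁻¹) : Matrix (Fin 2) (Fin 2) F)
      = ↑(h⁻¹) * (↑h * M') := by rw [hr, mul_one]
    _ = (↑(h⁻¹) * ↑h) * M' := by rw [mul_assoc]
    _ = M' := by rw [hh1, one_mul]

lemma fwd {F : Type*} [Field F] (MA Mh Mh' Mg Mg' : Matrix (Fin 2) (Fin 2) F)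
    (hA : ∀ c : F, MA ≠ c • (1 : Matrix (Fin 2) (Fin 2) F)) (hdA : MA.det = 1)
    (hdh : Mh'.det = 1) (h1 : Mh' * Mh = 1) (g1 : Mg' * Mg = 1)
    (e : Mh * MA * Mh' = Mg * MA * Mg') :
    ∃ u v : F, Mg.det = u ^ 2 + u * v * MA.trace + v ^ 2 := by
  have e1 : Mg * MA * Mg' * Mg = Mg * MA := by rw [mul_assoc, g1, mul_one]
  have e2 : Mh * MA * Mh' * Mg = Mg * MA := by rw [e, e1]
  have key : (Mh' * Mg) * MA = MA * (Mh' * Mg) := by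
    calc (Mh' * Mg) * MA = Mh' * (Mg * MA) := by rw [mul_assoc]
      _ = Mh' * (Mh * MA * Mh' * Mg) := by rw [e2]
      _ = (Mh' * Mh) * (MA * (Mh' * Mg)) := by simp only [mul_assoc]
      _ = MA * (Mh' * Mg) := by rw [h1, one_mul]
  obtain ⟨u, v, hCuv⟩ := cent2 MA (Mh' * Mg) hA key
  refine ⟨u, v, ?_⟩
  have hdC : (Mh' * Mg).det = Mg.det := by rw [Matrix.det_mul, hdh, one_mul]
  rw [← hdC, hCuv, detc _ hdA]

lemma bwd {F : Type*} [Field F] (MA Mg Mg' : Matrix (Fin 2) (Fin 2) F) (hdA : MA.det = 1)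
    (hgu : IsUnit Mg.det) (g1 : Mg' * Mg = 1) (g2 : Mg * Mg' = 1)
    (u v : F) (huv : Mg.det = u ^ 2 + u * v * MA.trace + v ^ 2) :
    ∃ M M' : Matrix (Fin 2) (Fin 2) F, M.det = 1 ∧ M' * M = 1 ∧ M * M' = 1 ∧
      M * MA * M' = Mg * MA * Mg' := by
  set X : Matrix (Fin 2) (Fin 2) F := u • 1 + v • MA with hX
  have hXdet : X.det = Mg.det := by rw [hX, detc _ hdA, huv]
  have hunit : IsUnit X.det := hXdet ▸ hgu
  have hcomm : X * MA = MA * X := by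
    rw [hX]
    simp [add_mul, mul_add, Matrix.smul_mul, Matrix.mul_smul]
  have hXinv1 : X * X⁻¹ = 1 := Matrix.mul_nonsing_inv X hunit
  have hXinv2 : X⁻¹ * X = 1 := Matrix.nonsing_inv_mul X hunit
  have hic : X⁻¹ * MA = MA * X⁻¹ := invcomm MA X hcomm hunit
  refine ⟨Mg * X⁻¹, X * Mg', ?_, ?_, ?_, ?_⟩
  · rw [Matrix.det_mul, Matrix.det_nonsing_inv, hXdet, Ring.mul_inverse_cancel _ hgu]
  · calc (X * Mg') * (Mg * X⁻¹) = X * (Mg' * Mg) * X⁻¹ := by simp only [mul_assoc]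
      _ = 1 := by rw [g1, mul_one, hXinv1]
  · calc (Mg * X⁻¹) * (X * Mg') = Mg * (X⁻¹ * X) * Mg' := by simp only [mul_assoc]
      _ = 1 := by rw [hXinv2, mul_one, g2]
  · calc (Mg * X⁻¹) * MA * (X * Mg') = Mg * ((X⁻¹ * MA) * X) * Mg' := by simp only [mul_assoc]
      _ = Mg * (MA * (X⁻¹ * X)) * Mg' := by rw [hic]; simp only [mul_assoc]
      _ = Mg * MA * Mg' := by rw [hXinv2, mul_one]

/-- The rational conjugacy classes inside the stable class of a non-scalar
`A ∈ SL(2,F)` are detected by the values of the norm form of the centralizer of `A`: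
`g A g⁻¹` is `SL(2,F)`-conjugate to `A` iff `det g = u² + uv·tr(A) + v²` for some `u, v`. -/
theorem stmt_1 (F : Type*) [Field F] (A : Matrix.SpecialLinearGroup (Fin 2) F)
    (hA : ∀ c : F, (↑A : Matrix (Fin 2) (Fin 2) F) ≠ c • (1 : Matrix (Fin 2) (Fin 2) F))
    (g : Matrix.GeneralLinearGroup (Fin 2) F) :
    (∃ h : Matrix.SpecialLinearGroup (Fin 2) F,
        (↑h : Matrix (Fin 2) (Fin 2) F) * (↑A : Matrix (Fin 2) (Fin 2) F) *
            (↑(h⁻¹) : Matrix (Fin 2) (Fin 2) F) =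
          (↑g : Matrix (Fin 2) (Fin 2) F) * (↑A : Matrix (Fin 2) (Fin 2) F) *
            (↑(g⁻¹) : Matrix (Fin 2) (Fin 2) F)) ↔
      ∃ u v : F, (↑g : Matrix (Fin 2) (Fin 2) F).det =
        u ^ 2 + u * v * (↑A : Matrix (Fin 2) (Fin 2) F).trace + v ^ 2 := by
  constructor
  · rintro ⟨h, hh⟩
    have hh1 : (↑(h⁻¹) : Matrix (Fin 2) (Fin 2) F) * (↑h : Matrix (Fin 2) (Fin 2) F) = 1 := by
      rw [← Matrix.SpecialLinearGroup.coe_mul, inv_mul_cancel, Matrix.SpecialLinearGroup.coe_one]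
    have hg1 : (↑(g⁻¹) : Matrix (Fin 2) (Fin 2) F) * (↑g : Matrix (Fin 2) (Fin 2) F) = 1 :=
      g.inv_mul
    have hdA : (↑A : Matrix (Fin 2) (Fin 2) F).det = 1 := by simp
    have hdh : (↑(h⁻¹) : Matrix (Fin 2) (Fin 2) F).det = 1 := by simp [Matrix.det_adjugate]
    exact fwd (F := F) (↑A) (↑h) (↑(h⁻¹)) (↑g) (↑(g⁻¹)) hA hdA hdh hh1 hg1 hh
  · rintro ⟨u, v, huv⟩
    have hgu : IsUnit (↑g : Matrix (Fin 2) (Fin 2) F).det :=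
      (Matrix.isUnit_iff_isUnit_det _).1 g.isUnit
    have hg1 : (↑(g⁻¹) : Matrix (Fin 2) (Fin 2) F) * (↑g : Matrix (Fin 2) (Fin 2) F) = 1 :=
      g.inv_mul
    have hg2 : (↑g : Matrix (Fin 2) (Fin 2) F) * (↑(g⁻¹) : Matrix (Fin 2) (Fin 2) F) = 1 :=
      g.mul_inv
    obtain ⟨M, M', hM1, hM'M, hMM', hconj⟩ :=
      bwd (F := F) (↑A) (↑g) (↑(g⁻¹)) (by simp) hgu hg1 hg2 u v huv
    refine ⟨⟨M, hM1⟩, ?_⟩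
    rw [sl_inv_eq (F := F) ⟨M, hM1⟩ M' hMM']
    exact hconj
end

section
/- Let F be a field and, for a ∈ F, let u(a) denote the matrix !![1, a; 0, 1]. For all a, b in Fˣ (nonzero), there exists h ∈ SL(2,F) with h · u(a) · h⁻¹ = u(b) if and only if there exists c ∈ Fˣ with b = c² · a. (The regular unipotent conjugacy classes of SL(2,F) are in bijection with Fˣ/(Fˣ)².) -/
/-- The regular unipotent conjugacy classes of `SL(2,F)` are in bijection with
`Fˣ/(Fˣ)²`: `u(a)` and `u(b)` are `SL(2,F)`-conjugate iff `b = c² a` for some unit `c`. -/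
theorem stmt_2 (F : Type*) [Field F] (a b : Fˣ) :
    (∃ h : Matrix.SpecialLinearGroup (Fin 2) F,
        (↑h : Matrix (Fin 2) (Fin 2) F) * !![1, (a : F); 0, 1] *
            (↑(h⁻¹) : Matrix (Fin 2) (Fin 2) F) =
          !![1, (b : F); 0, 1]) ↔
      ∃ c : Fˣ, (b : F) = (c : F) ^ 2 * (a : F) := by
  constructor
  · rintro ⟨h, hh⟩
    have key : (↑h : Matrix (Fin 2) (Fin 2) F) * !![1, (a : F); 0, 1]
        = !![1, (b : F); 0, 1] * (↑h : Matrix (Fin 2) (Fin 2) F) := by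
      have := congrArg (· * (↑h : Matrix (Fin 2) (Fin 2) F)) hh
      simp only [mul_assoc, ← Matrix.SpecialLinearGroup.coe_mul, inv_mul_cancel,
        Matrix.SpecialLinearGroup.coe_one, mul_one] at this
      exact this
    set p := h.1 0 0 with hp
    set q := h.1 0 1 with hq
    set r := h.1 1 0 with hr
    set s := h.1 1 1 with hs
    have heta : (↑h : Matrix (Fin 2) (Fin 2) F) = !![p, q; r, s] :=
      Matrix.eta_fin_two _
    have hdet : p * s - q * r = 1 := by
      have := h.2
      rwa [Matrix.det_fin_two] at this
    rw [heta] at key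
    rw [show (!![p, q; r, s] * !![1, (a : F); 0, 1]) = !![p, p * a + q; r, r * a + s] by
      simp [Matrix.mul_fin_two], show (!![1, (b : F); 0, 1] * !![p, q; r, s])
        = !![p + b * r, q + b * s; r, s] by simp [Matrix.mul_fin_two]] at key
    have h01 : p * a + q = q + b * s := congrFun (congrFun key 0) 1
    have h00 : p = p + b * r := congrFun (congrFun key 0) 0
    have hr0 : r = 0 := by
      have hbr : (b : F) * r = 0 := by linear_combination -h00
      rcases mul_eq_zero.mp hbr with hb | hr'
      · exact absurd hb b.ne_zero
      · exact hr'
    have hps : p * s = 1 := by rw [hr0] at hdet; linear_combination hdet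
    refine ⟨Units.mk p s hps ((mul_comm s p).trans hps), ?_⟩
    have hpa : p * a = b * s := by linear_combination h01
    have : (b : F) * (s * p) = p * a * p := by rw [← mul_assoc, ← hpa]
    rw [mul_comm s p, hps, mul_one] at this
    rw [this]; ring
  · rintro ⟨c, hc⟩
    have hdet : Matrix.det !![(c : F), 0; 0, ((c⁻¹ : Fˣ) : F)] = 1 := by
      simp [Matrix.det_fin_two_of]
    set g : Matrix.SpecialLinearGroup (Fin 2) F :=
      ⟨!![(c : F), 0; 0, ((c⁻¹ : Fˣ) : F)], hdet⟩ with hg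
    refine ⟨g, ?_⟩
    have hgc : (↑g : Matrix (Fin 2) (Fin 2) F) = !![(c : F), 0; 0, ((c⁻¹ : Fˣ) : F)] := rfl
    have hinv : (↑(g⁻¹) : Matrix (Fin 2) (Fin 2) F)
        = !![((c⁻¹ : Fˣ) : F), 0; 0, (c : F)] := by
      rw [Matrix.SpecialLinearGroup.coe_inv, hgc]
      simp [Matrix.adjugate_fin_two_of]
    rw [hinv, hgc]
    have hci : ((c⁻¹ : Fˣ) : F) = (c : F)⁻¹ := Units.val_inv_eq_inv_val c
    ext i j
    fin_cases i <;> fin_cases j <;>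
      simp [Matrix.mul_apply, Fin.sum_univ_succ, hc, hci] <;>
      first
      | rfl
      | ring
      | (field_simp; ring)
end

section
/- Let F = LaurentSeries (ZMod 2), the field 𝔽₂((X)) of formal Laurent series over the field with two elements (a local field of characteristic 2). Then the quotient group Fˣ / (Fˣ)², where (Fˣ)² is the range of the squaring homomorphism x ↦ x² on Fˣ, is uncountable. -/
noncomputable section

open Classical in
/-- the power series 1 + ∑_{k ∈ S} X^(2k+1) -/
noncomputable def gS (S : Set ℕ) : PowerSeries (ZMod 2) :=
  PowerSeries.mk fun n => if n = 0 then 1 else if ∃ k ∈ S, n = 2*k+1 then 1 else 0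

lemma gS_coeff_zero (S : Set ℕ) : PowerSeries.coeff (R := ZMod 2) 0 (gS S) = 1 := by
  simp [gS]

open Classical in
lemma gS_coeff_odd (S : Set ℕ) (k : ℕ) :
    PowerSeries.coeff (R := ZMod 2) (2*k+1) (gS S) = if k ∈ S then 1 else 0 := by
  simp only [gS, PowerSeries.coeff_mk]
  rw [if_neg (show ¬(2*k+1 = 0) by omega)]
  by_cases hk : k ∈ S
  · rw [if_pos ⟨k, hk, rfl⟩, if_pos hk]
  · rw [if_neg, if_neg hk]
    rintro ⟨j, hj, hje⟩
    obtain rfl : j = k := by omega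
    exact hk hj

lemma gS_coeff_even (S : Set ℕ) (m : ℕ) (hm : m ≠ 0) (he : ¬ Odd m) :
    PowerSeries.coeff (R := ZMod 2) m (gS S) = 0 := by
  simp only [gS, PowerSeries.coeff_mk]
  rw [if_neg hm, if_neg]
  rintro ⟨k, _, rfl⟩
  exact he ⟨k, by omega⟩

open Classical in
/-- key computation of odd coefficient of product -/
lemma gS_mul_coeff (S T : Set ℕ) (n : ℕ) :
    PowerSeries.coeff (R := ZMod 2) (2*n+1) (gS S * gS T) =
      (if n ∈ S then 1 else 0) + (if n ∈ T then 1 else 0) := by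
  rw [PowerSeries.coeff_mul]
  rw [Finset.sum_eq_add (2*n+1, 0) (0, 2*n+1) (by simp)]
  · rw [gS_coeff_zero, gS_coeff_zero, gS_coeff_odd, gS_coeff_odd, one_mul, mul_one]
  · rintro ⟨a, b⟩ hc ⟨h1, h2⟩
    simp only [Finset.HasAntidiagonal.mem_antidiagonal] at hc
    have ha : a ≠ 0 := by
      rintro rfl
      apply h2
      have : b = 2*n+1 := by omega
      subst this; rfl
    have hb : b ≠ 0 := by
      rintro rfl
      apply h1
      have : a = 2*n+1 := by omega
      subst this; rfl
    rcases Nat.even_or_odd a with hea | hoa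
    · rw [gS_coeff_even S a ha (by rw [Nat.not_odd_iff_even]; exact hea), zero_mul]
    · have heb : ¬ Odd b := by
        rintro ⟨y, hy⟩
        obtain ⟨x, hx⟩ := hoa
        omega
      rw [gS_coeff_even T b hb heb, mul_zero]
  · intro h; exact absurd (Finset.HasAntidiagonal.mem_antidiagonal.mpr (by omega)) h
  · intro h; exact absurd (Finset.HasAntidiagonal.mem_antidiagonal.mpr (by omega)) h

/-- in char 2, odd coefficients of a square vanish -/
lemma sq_coeff_odd (h : LaurentSeries (ZMod 2)) {n : ℤ} (hn : Odd n) :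
    (h * h).coeff n = 0 := by
  rw [HahnSeries.coeff_mul]
  refine Finset.sum_involution (fun p _ => (p.2, p.1)) ?_ ?_ ?_ ?_
  · intro p hp
    simp only
    rw [mul_comm, ← two_mul]
    have : (2 : ZMod 2) = 0 := by decide
    rw [this, zero_mul]
  · intro p hp _ heq
    have h1 : p.2 = p.1 := congrArg Prod.fst heq
    rw [Finset.mem_addAntidiagonal] at hp
    obtain ⟨x, hx⟩ := hn
    have := hp.2.2
    rw [h1] at this
    omega
  · intro p hp
    rw [Finset.mem_addAntidiagonal] at hp ⊢
    exact ⟨hp.2.1, hp.1, by rw [add_comm]; exact hp.2.2⟩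
  · intro p hp; rfl

def fS (S : Set ℕ) : LaurentSeries (ZMod 2) := HahnSeries.ofPowerSeries ℤ (ZMod 2) (gS S)

lemma fS_ne_zero (S : Set ℕ) : fS S ≠ 0 := by
  intro h
  have := congrArg (fun x => HahnSeries.coeff x ((0 : ℕ) : ℤ)) h
  simp only [fS, HahnSeries.ofPowerSeries_apply_coeff, gS_coeff_zero,
    HahnSeries.coeff_zero] at this
  exact one_ne_zero this

def uS (S : Set ℕ) : (LaurentSeries (ZMod 2))ˣ :=
  (isUnit_iff_ne_zero.mpr (fS_ne_zero S)).unit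

lemma uS_val (S : Set ℕ) : (uS S : LaurentSeries (ZMod 2)) = fS S :=
  IsUnit.unit_spec _

instance uncSet : Uncountable (Set ℕ) := by
  rw [← not_countable_iff]
  intro h
  obtain ⟨f, hf⟩ := h.exists_injective_nat'
  exact Function.cantor_injective f hf

/-- For the local field `F = 𝔽₂((X))` of characteristic 2, the quotient group
`Fˣ/(Fˣ)²` is uncountable. -/
theorem stmt_3 :
    Uncountable ((LaurentSeries (ZMod 2))ˣ ⧸
      MonoidHom.range (powMonoidHom (α := (LaurentSeries (ZMod 2))ˣ) 2)) := by
  have key : Function.Injective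
      (fun S : Set ℕ => (QuotientGroup.mk (uS S) :
        (LaurentSeries (ZMod 2))ˣ ⧸
          MonoidHom.range (powMonoidHom (α := (LaurentSeries (ZMod 2))ˣ) 2))) := by
    intro S T hST
    rw [QuotientGroup.eq] at hST
    obtain ⟨v, hv⟩ := hST
    have hv' : (uS S)⁻¹ * uS T = v ^ 2 := hv.symm
    have hT : (uS T : LaurentSeries (ZMod 2)) = uS S * (v : LaurentSeries (ZMod 2)) ^ 2 := by
      have : uS T = uS S * v ^ 2 := by
        rw [← hv']; group
      rw [this]; push_cast; ring
    have hsq : fS S * fS T =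
        ((fS S * v) : LaurentSeries (ZMod 2)) * (fS S * v) := by
      rw [← uS_val S, ← uS_val T, hT]; ring
    ext n
    by_cases hn : n ∈ S <;> by_cases hn' : n ∈ T <;> [skip; skip; skip; skip]
    all_goals simp only [hn, hn'] <;> try tauto
    · -- n ∈ S, n ∉ T : contradiction
      exfalso
      have h0 : (fS S * fS T).coeff ((2*n+1 : ℕ) : ℤ) = 0 := by
        rw [hsq]
        exact sq_coeff_odd _ ⟨n, by push_cast; ring⟩
      have h1 : (fS S * fS T).coeff ((2*n+1 : ℕ) : ℤ) = 1 := by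
        rw [show fS S * fS T = HahnSeries.ofPowerSeries ℤ (ZMod 2) (gS S * gS T) by
          rw [map_mul]; rfl]
        rw [HahnSeries.ofPowerSeries_apply_coeff, gS_mul_coeff, if_pos hn, if_neg hn']
        decide
      rw [h0] at h1
      exact one_ne_zero h1.symm
    · exfalso
      have h0 : (fS S * fS T).coeff ((2*n+1 : ℕ) : ℤ) = 0 := by
        rw [hsq]
        exact sq_coeff_odd _ ⟨n, by push_cast; ring⟩
      have h1 : (fS S * fS T).coeff ((2*n+1 : ℕ) : ℤ) = 1 := by
        rw [show fS S * fS T = HahnSeries.ofPowerSeries ℤ (ZMod 2) (gS S * gS T) by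
          rw [map_mul]; rfl]
        rw [HahnSeries.ofPowerSeries_apply_coeff, gS_mul_coeff, if_neg hn, if_pos hn']
        decide
      rw [h0] at h1
      exact one_ne_zero h1.symm
  exact key.uncountable

end
end

section
/- Let F = LaurentSeries (ZMod 2), the field 𝔽₂((X)) of formal Laurent series over the field with two elements. Consider on Fˣ the equivalence relation a ∼ b defined by: there exists g ∈ SL(2,F) with g · u(a) · g⁻¹ = u(b), where u(a) = !![1, a; 0, 1]. Then the quotient of Fˣ by this relation is uncountable. (Over a local field of characteristic 2, the regular unipotent conjugacy classes of SL(2,F) form an uncountable set.) -/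
open LaurentSeries

noncomputable section Aux4

abbrev F4 : Type := LaurentSeries (ZMod 2)

/-- even-supported -/
def EvS (x : F4) : Prop := ∀ n : ℤ, Odd n → x.coeff n = 0
/-- odd-supported -/
def OdS (x : F4) : Prop := ∀ n : ℤ, Even n → x.coeff n = 0

lemma evS_sq (t : F4) : EvS (t * t) := by
  intro n hn
  rw [HahnSeries.coeff_mul]
  apply Finset.sum_involution (fun ij _ => (ij.2, ij.1))
  · intro a _
    show t.coeff a.1 * t.coeff a.2 + t.coeff a.2 * t.coeff a.1 = 0
    rw [mul_comm (t.coeff a.2)]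
    exact CharTwo.add_self_eq_zero _
  · intro a ha _
    intro h
    have h1 : a.2 = a.1 := congrArg Prod.fst h
    rw [Finset.mem_addAntidiagonal] at ha
    have h2 : a.1 + a.2 = n := ha.2.2
    rw [h1] at h2
    exact (Int.not_odd_iff_even.mpr ⟨a.1, by linarith⟩) hn
  · intro a ha
    rw [Finset.mem_addAntidiagonal] at ha ⊢
    exact ⟨ha.2.1, ha.1, by rw [add_comm]; exact ha.2.2⟩
  · intro a _; rfl

lemma odS_mul {x y : F4} (hx : EvS x) (hy : OdS y) : OdS (x * y) := by
  intro n hn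
  rw [HahnSeries.coeff_mul]
  apply Finset.sum_eq_zero
  intro ij hij
  rw [Finset.mem_addAntidiagonal] at hij
  rcases Int.even_or_odd ij.1 with h1 | h1
  · have h2 : Even ij.2 := by
      rcases h1 with ⟨k, hk⟩; rcases hn with ⟨m, hm⟩
      exact ⟨m - k, by omega⟩
    rw [hy _ h2, mul_zero]
  · rw [hx _ h1, zero_mul]

lemma evS_one : EvS 1 := by
  intro n hn
  rw [HahnSeries.coeff_one]
  have : n ≠ 0 := by rintro rfl; simp at hn
  simp [this]

/-- the odd-part power series attached to `S` -/
def wps (S : ℕ → Bool) : PowerSeries (ZMod 2) :=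
  PowerSeries.mk fun n => if n % 2 = 1 ∧ S (n / 2) then 1 else 0

def wS (S : ℕ → Bool) : F4 := ((wps S : PowerSeries (ZMod 2)) : LaurentSeries (ZMod 2))

lemma wS_coeff (S : ℕ → Bool) (i : ℤ) :
    (wS S).coeff i = if i % 2 = 1 ∧ (0 ≤ i ∧ S (i.natAbs / 2)) then 1 else 0 := by
  rw [wS, PowerSeries.coeff_coe]
  simp only [wps, PowerSeries.coeff_mk]
  rcases lt_or_ge i 0 with h0 | h0
  · rw [if_pos h0, if_neg (by rintro ⟨-, h, -⟩; omega)]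
  · rw [if_neg (not_lt.mpr h0)]
    have hmod : i.natAbs % 2 = 1 ↔ i % 2 = 1 := by omega
    by_cases hs : S (i.natAbs / 2) <;> by_cases hm : i % 2 = 1 <;>
      simp [hs, hm, hmod, h0]

lemma odS_wS (S : ℕ → Bool) : OdS (wS S) := by
  intro n hn
  rw [wS_coeff, if_neg]
  rintro ⟨h1, -⟩
  rcases hn with ⟨k, hk⟩
  omega

def aa (S : ℕ → Bool) : F4 := 1 + wS S

lemma aa_ne_zero (S : ℕ → Bool) : aa S ≠ 0 := by
  intro h
  have h0 : (aa S).coeff 0 = 0 := by rw [h]; simp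
  rw [aa, HahnSeries.coeff_add, HahnSeries.coeff_one, if_pos rfl,
    odS_wS S 0 (Even.zero)] at h0
  simp at h0

/-- decomposition uniqueness -/
lemma decomp {e1 o1 e2 o2 : F4} (he1 : EvS e1) (ho1 : OdS o1) (he2 : EvS e2) (ho2 : OdS o2)
    (h : e1 + o1 = e2 + o2) : e1 = e2 ∧ o1 = o2 := by
  constructor <;> ext n <;>
    have hc : e1.coeff n + o1.coeff n = e2.coeff n + o2.coeff n := by
      rw [← HahnSeries.coeff_add, ← HahnSeries.coeff_add, h]
  · rcases Int.even_or_odd n with hn | hn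
    · rw [ho1 _ hn, ho2 _ hn] at hc; simpa using hc
    · rw [he1 _ hn, he2 _ hn]
  · rcases Int.even_or_odd n with hn | hn
    · rw [ho1 _ hn, ho2 _ hn]
    · rw [he1 _ hn, he2 _ hn] at hc; simpa using hc

end Aux4

/-- Over the local field `F = 𝔽₂((X))` of characteristic 2, the regular unipotent
conjugacy classes of `SL(2,F)` form an uncountable set. -/
theorem stmt_4 :
    Uncountable (Quot (fun a b : (LaurentSeries (ZMod 2))ˣ =>
      ∃ g : Matrix.SpecialLinearGroup (Fin 2) (LaurentSeries (ZMod 2)),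
        (↑g : Matrix (Fin 2) (Fin 2) (LaurentSeries (ZMod 2))) *
            !![1, (a : LaurentSeries (ZMod 2)); 0, 1] *
            (↑(g⁻¹) : Matrix (Fin 2) (Fin 2) (LaurentSeries (ZMod 2))) =
          !![1, (b : LaurentSeries (ZMod 2)); 0, 1])) := by
  set r := (fun a b : (LaurentSeries (ZMod 2))ˣ =>
      ∃ g : Matrix.SpecialLinearGroup (Fin 2) (LaurentSeries (ZMod 2)),
        (↑g : Matrix (Fin 2) (Fin 2) (LaurentSeries (ZMod 2))) *
            !![1, (a : LaurentSeries (ZMod 2)); 0, 1] *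
            (↑(g⁻¹) : Matrix (Fin 2) (Fin 2) (LaurentSeries (ZMod 2))) =
          !![1, (b : LaurentSeries (ZMod 2)); 0, 1]) with hr
  -- the square subgroup
  set Sq : Subgroup (F4)ˣ := (powMonoidHom (α := (F4)ˣ) 2).range with hSq
  -- key: the relation implies same square class
  have key : ∀ a b : (F4)ˣ, r a b →
      (QuotientGroup.mk a : (F4)ˣ ⧸ Sq) = QuotientGroup.mk b := by
    intro a b ⟨g, hg⟩
    set M := (↑g : Matrix (Fin 2) (Fin 2) F4) with hM
    have hinv : (↑(g⁻¹) : Matrix (Fin 2) (Fin 2) F4) * M = 1 := by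
      rw [hM, ← Matrix.SpecialLinearGroup.coe_mul, inv_mul_cancel,
        Matrix.SpecialLinearGroup.coe_one]
    have hMeq : M * !![1, (a : F4); 0, 1] = !![1, (b : F4); 0, 1] * M := by
      have h := congrArg (fun N => N * M) hg
      rwa [mul_assoc, hinv, mul_one] at h
    have h11 : M 1 0 * (a : F4) + M 1 1 = M 1 1 := by
      have := congrFun (congrFun hMeq 1) 1
      simpa [Matrix.mul_apply, Fin.sum_univ_two] using this
    have hr0 : M 1 0 = 0 := by
      have : M 1 0 * (a : F4) = 0 := by linear_combination h11
      rcases mul_eq_zero.mp this with h | h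
      · exact h
      · exact absurd h a.ne_zero
    have h01 : M 0 0 * (a : F4) + M 0 1 = M 0 1 + (b : F4) * M 1 1 := by
      have := congrFun (congrFun hMeq 0) 1
      simpa [Matrix.mul_apply, Fin.sum_univ_two] using this
    have hdet : M 0 0 * M 1 1 - M 0 1 * M 1 0 = 1 := by
      have := g.property
      rwa [Matrix.det_fin_two] at this
    have hps : M 0 0 * M 1 1 = 1 := by rw [hr0] at hdet; linear_combination hdet
    have hb : (b : F4) = M 0 0 ^ 2 * (a : F4) := by
      have h1 : M 0 0 * (a : F4) = (b : F4) * M 1 1 := by linear_combination h01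
      have := congrArg (· * M 0 0) h1
      calc (b : F4) = (b : F4) * (M 1 1 * M 0 0) := by
            rw [mul_comm (M 1 1), hps, mul_one]
        _ = M 0 0 * (a : F4) * M 0 0 := by rw [← mul_assoc, ← this]
        _ = M 0 0 ^ 2 * (a : F4) := by ring
    have hp : M 0 0 ≠ 0 := by
      intro h; rw [h, zero_mul] at hps; exact zero_ne_one hps
    rw [QuotientGroup.eq, hSq, MonoidHom.mem_range]
    refine ⟨Units.mk0 (M 0 0) hp, ?_⟩
    rw [powMonoidHom_apply, eq_inv_mul_iff_mul_eq, Units.ext_iff]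
    simp only [Units.val_mul, Units.val_pow_eq_pow_val, Units.val_mk0, hb]
    ring
  -- lift
  have : Function.Injective (fun S : ℕ → Bool =>
      Quot.mk r (Units.mk0 (aa S) (aa_ne_zero S))) := by
    intro S T h
    have h2 := congrArg (Quot.lift (QuotientGroup.mk : (F4)ˣ → (F4)ˣ ⧸ Sq) key) h
    simp only [Quot.lift_mk] at h2
    rw [QuotientGroup.eq] at h2
    obtain ⟨p, hp⟩ := h2
    rw [powMonoidHom_apply] at hp
    have hp' : Units.mk0 (aa T) (aa_ne_zero T) = Units.mk0 (aa S) (aa_ne_zero S) * p ^ 2 := by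
      rw [hp, mul_inv_cancel_left]
    have hfield : aa T = ((p : F4) * (p : F4)) * aa S := by
      have h3 := congrArg (fun u : (F4)ˣ => (u : F4)) hp'
      simp only [Units.val_mul, Units.val_pow_eq_pow_val, Units.val_mk0] at h3
      rw [h3]; ring
    -- decompose
    have heq : (p : F4) * (p : F4) + ((p : F4) * (p : F4)) * wS S = 1 + wS T := by
      calc (p : F4) * (p : F4) + ((p : F4) * (p : F4)) * wS S
          = ((p : F4) * (p : F4)) * (1 + wS S) := by ring
        _ = aa T := by rw [← aa, ← hfield]
        _ = 1 + wS T := rfl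
    obtain ⟨hpp, hw⟩ := decomp (evS_sq _) (odS_mul (evS_sq _) (odS_wS S)) evS_one (odS_wS T) heq
    rw [hpp, one_mul] at hw
    funext n
    have hc := congrArg (fun x : F4 => x.coeff (2 * (n : ℤ) + 1)) hw
    simp only [wS_coeff] at hc
    have e1 : (2 * (n : ℤ) + 1) % 2 = 1 := by omega
    have e2 : (0:ℤ) ≤ 2 * (n : ℤ) + 1 := by omega
    have e3 : ((2 * (n : ℤ) + 1)).natAbs / 2 = n := by omega
    rw [e3] at hc
    simp only [e1, e2, true_and, and_true] at hc
    by_cases hS : S n = true <;> by_cases hT : T n = true <;>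
      simp [hS, hT] at hc ⊢
  have hU : Uncountable (ℕ → Bool) := by
    rw [← Cardinal.aleph0_lt_mk_iff]
    have h2 : Cardinal.mk (ℕ → Bool) = 2 ^ Cardinal.aleph0 := by
      simp [Cardinal.mk_arrow, Cardinal.mk_bool, Cardinal.mk_nat]
    rw [h2]
    exact Cardinal.cantor _
  exact this.uncountable
end

section
/- Let p be an odd prime. Then the quotient group ℚ_pˣ / (ℚ_pˣ)², where (ℚ_pˣ)² is the range of the squaring homomorphism x ↦ x² on the units of the p-adic numbers, has exactly 4 elements. -/
open PadicInt Padic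

variable {p : ℕ} [Fact p.Prime]

/-- toZMod x = 0 iff ‖x‖ < 1 -/
private lemma toZMod_eq_zero_iff_norm_lt_one (x : ℤ_[p]) :
    PadicInt.toZMod x = 0 ↔ ‖x‖ < 1 := by
  rw [← RingHom.mem_ker, PadicInt.ker_toZMod, IsLocalRing.mem_maximalIdeal, mem_nonunits_iff,
    PadicInt.isUnit_iff]
  constructor
  · intro h
    exact lt_of_le_of_ne x.norm_le_one h
  · intro h
    exact ne_of_lt h

/-- Hensel: a unit of ℤ_p that is a square mod p is a square. -/
private lemma isSquare_of_isSquare_toZMod (hp : Odd p) (u : ℤ_[p]) (hu : ‖u‖ = 1)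
    (hsq : IsSquare (PadicInt.toZMod u)) : IsSquare u := by
  obtain ⟨s, hs⟩ := hsq
  set a : ℤ_[p] := ((s.val : ℕ) : ℤ_[p]) with ha
  have hta : PadicInt.toZMod a = s := by
    rw [ha, map_natCast, ZMod.natCast_val, ZMod.cast_id]
  have hs0 : s ≠ 0 := by
    intro h
    rw [h, mul_zero] at hs
    have : ‖u‖ < 1 := (toZMod_eq_zero_iff_norm_lt_one u).mp hs
    rw [hu] at this; exact lt_irrefl _ this
  have hna : ‖a‖ = 1 := by
    by_contra h
    have h1 : ‖a‖ < 1 := lt_of_le_of_ne a.norm_le_one h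
    have := (toZMod_eq_zero_iff_norm_lt_one a).mpr h1
    rw [hta] at this; exact hs0 this
  -- the polynomial X^2 - u
  set F : Polynomial ℤ_[p] := Polynomial.X ^ 2 - Polynomial.C u with hF
  have hFeval : ∀ z : ℤ_[p], F.eval z = z ^ 2 - u := by
    intro z; simp [hF]
  have hFd : ∀ z : ℤ_[p], (Polynomial.derivative F).eval z = 2 * z := by
    intro z
    rw [hF]
    simp only [Polynomial.derivative_sub, Polynomial.derivative_C, Polynomial.derivative_X_pow]
    simp
  have h2 : ‖(2 : ℤ_[p])‖ = 1 := by
    have : ¬ ((p : ℤ) ∣ (2 : ℤ)) := by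
      intro h
      have h2 : p ∣ 2 := by exact_mod_cast h
      have : p = 2 := (Nat.prime_dvd_prime_iff_eq Fact.out Nat.prime_two).mp h2
      rw [this] at hp
      exact absurd hp (by decide)
    have hlt := (PadicInt.norm_int_lt_one_iff_dvd (2 : ℤ)).not.mpr this
    push_cast at hlt
    exact le_antisymm (PadicInt.norm_le_one _) (not_lt.mp hlt)
  have hda : ‖(Polynomial.derivative F).eval a‖ = 1 := by
    rw [hFd, norm_mul, h2, hna, one_mul]
  have hnorm : ‖F.eval a‖ < ‖(Polynomial.derivative F).eval a‖ ^ 2 := by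
    rw [hda, one_pow, hFeval]
    rw [← toZMod_eq_zero_iff_norm_lt_one]
    rw [map_sub, map_pow, hta, hs, sq, sub_self]
  obtain ⟨z, hz, -⟩ := hensels_lemma hnorm
  rw [Polynomial.coe_aeval_eq_eval, hFeval] at hz
  exact ⟨z, by rw [← sq]; exact (sub_eq_zero.mp hz).symm⟩

/-- For an odd prime `p`, the quotient group `ℚ_pˣ/(ℚ_pˣ)²` has exactly 4 elements. -/
theorem stmt_5 (p : ℕ) [Fact p.Prime] (hp : Odd p) :
    Nat.card ((ℚ_[p])ˣ ⧸ MonoidHom.range (powMonoidHom (α := (ℚ_[p])ˣ) 2)) = 4 := by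
  have pp : p.Prime := Fact.out
  have hp2 : p ≠ 2 := by rintro rfl; exact absurd hp (by decide)
  have hp0 : (p : ℚ_[p]) ≠ 0 := by
    exact_mod_cast Nat.cast_ne_zero.mpr pp.ne_zero
  have hxne : ∀ x : (ℚ_[p])ˣ, (x : ℚ_[p]) ≠ 0 := fun x => x.ne_zero
  -- the valuation component
  have vmul : ∀ x y : (ℚ_[p])ˣ,
      ((x * y : (ℚ_[p])ˣ) : ℚ_[p]).valuation =
        (x : ℚ_[p]).valuation + (y : ℚ_[p]).valuation := by
    intro x y
    exact Padic.valuation_mul (hxne x) (hxne y)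
  let v2 : (ℚ_[p])ˣ →* Multiplicative (ZMod 2) :=
    { toFun := fun x => Multiplicative.ofAdd (((x : ℚ_[p]).valuation : ZMod 2))
      map_one' := by
        show Multiplicative.ofAdd ((((1 : (ℚ_[p])ˣ) : ℚ_[p]).valuation : ZMod 2)) = 1
        rw [Units.val_one, Padic.valuation_one]
        norm_num
      map_mul' := by
        intro x y
        show Multiplicative.ofAdd ((((x * y : (ℚ_[p])ˣ) : ℚ_[p]).valuation : ZMod 2)) =
          Multiplicative.ofAdd (((x : ℚ_[p]).valuation : ZMod 2)) *
          Multiplicative.ofAdd (((y : ℚ_[p]).valuation : ZMod 2))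
        rw [vmul x y]
        push_cast
        rw [ofAdd_add] }
  -- the unit part
  have norm_unitPart : ∀ x : (ℚ_[p])ˣ,
      ‖(x : ℚ_[p]) * (p : ℚ_[p]) ^ (-(x : ℚ_[p]).valuation)‖ ≤ 1 := by
    intro x
    rw [_root_.norm_mul, Padic.norm_p_zpow, Padic.norm_eq_zpow_neg_valuation (hxne x), neg_neg,
      ← zpow_add₀ (by exact_mod_cast Nat.cast_ne_zero.mpr pp.ne_zero : (p:ℝ) ≠ 0)]
    simp
  let up : (ℚ_[p])ˣ → ℤ_[p] := fun x =>
    ⟨(x : ℚ_[p]) * (p : ℚ_[p]) ^ (-(x : ℚ_[p]).valuation), norm_unitPart x⟩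
  have up_norm : ∀ x, ‖up x‖ = 1 := by
    intro x
    show ‖(x : ℚ_[p]) * (p : ℚ_[p]) ^ (-(x : ℚ_[p]).valuation)‖ = 1
    rw [_root_.norm_mul, Padic.norm_p_zpow, Padic.norm_eq_zpow_neg_valuation (hxne x), neg_neg,
      ← zpow_add₀ (by exact_mod_cast Nat.cast_ne_zero.mpr pp.ne_zero : (p:ℝ) ≠ 0)]
    simp
  let ψ : (ℚ_[p])ˣ →* ℤ_[p] :=
    { toFun := up
      map_one' := by
        apply Subtype.ext
        show ((1 : (ℚ_[p])ˣ) : ℚ_[p]) * (p : ℚ_[p]) ^ (-((1:(ℚ_[p])ˣ) : ℚ_[p]).valuation) = 1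
        simp [Padic.valuation_one]
      map_mul' := by
        intro x y
        apply Subtype.ext
        show ((x*y : (ℚ_[p])ˣ) : ℚ_[p]) * (p : ℚ_[p]) ^ (-((x*y:(ℚ_[p])ˣ) : ℚ_[p]).valuation) =
          ((x : ℚ_[p]) * (p : ℚ_[p]) ^ (-(x : ℚ_[p]).valuation)) *
          ((y : ℚ_[p]) * (p : ℚ_[p]) ^ (-(y : ℚ_[p]).valuation))
        rw [vmul x y, neg_add, zpow_add₀ hp0]
        push_cast
        ring }
  let χ : (ℚ_[p])ˣ →* ZMod p := (PadicInt.toZMod (p := p)).toMonoidHom.comp ψ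
  let Φ : (ℚ_[p])ˣ →* Multiplicative (ZMod 2) × ℤˣ :=
    v2.prod ((quadraticChar (ZMod p)).toUnitHom.comp χ.toHomUnits)
  have hχ : ∀ x, χ x = PadicInt.toZMod (up x) := fun x => rfl
  have hχ0 : ∀ x, χ x ≠ 0 := by
    intro x h
    have := (toZMod_eq_zero_iff_norm_lt_one (up x)).mp h
    rw [up_norm] at this
    exact lt_irrefl _ this
  have hΦ2 : ∀ x, (Φ x).2 = (quadraticChar (ZMod p)).toUnitHom (χ.toHomUnits x) := fun x => rfl
  have hΦ2' : ∀ x, (((Φ x).2 : ℤˣ) : ℤ) = quadraticChar (ZMod p) (χ x) := by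
    intro x
    rw [hΦ2, MulChar.coe_toUnitHom, MonoidHom.coe_toHomUnits]
  -- kernel = squares
  have hker : Φ.ker = MonoidHom.range (powMonoidHom (α := (ℚ_[p])ˣ) 2) := by
    ext x
    simp only [MonoidHom.mem_ker, MonoidHom.mem_range, powMonoidHom_apply]
    constructor
    · intro h
      have h1 : (Φ x).1 = 1 := by rw [h]; rfl
      have h2' : (Φ x).2 = 1 := by rw [h]; rfl
      -- valuation is even
      have hv : ((((x : ℚ_[p]).valuation : ZMod 2))) = 0 := by
        have : Multiplicative.ofAdd (((x : ℚ_[p]).valuation : ZMod 2)) = 1 := h1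
        simpa using this
      obtain ⟨k, hk⟩ : (2 : ℤ) ∣ (x : ℚ_[p]).valuation := by
        have := (ZMod.intCast_zmod_eq_zero_iff_dvd ((x : ℚ_[p]).valuation) 2).mp hv
        exact_mod_cast this
      -- unit part is a square
      have hq : quadraticChar (ZMod p) (χ x) = 1 := by
        have := hΦ2' x
        rw [h2'] at this
        exact this.symm
      have hsqc : IsSquare (χ x) := (quadraticChar_one_iff_isSquare (hχ0 x)).mp hq
      have hsqu : IsSquare (up x) :=
        isSquare_of_isSquare_toZMod hp (up x) (up_norm x) hsqc
      obtain ⟨z, hz⟩ := hsqu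
      -- x = (z * p^k)^2
      have hxval : (x : ℚ_[p]) = ((z : ℚ_[p]) * (p : ℚ_[p]) ^ k) ^ 2 := by
        have h1 : ((up x : ℤ_[p]) : ℚ_[p]) =
            (x : ℚ_[p]) * (p : ℚ_[p]) ^ (-(x : ℚ_[p]).valuation) := rfl
        have h2'' : ((up x : ℤ_[p]) : ℚ_[p]) = (z : ℚ_[p]) * (z : ℚ_[p]) := by
          rw [hz]; push_cast; ring
        have : (x : ℚ_[p]) = (z : ℚ_[p]) * (z : ℚ_[p]) * (p : ℚ_[p]) ^ ((x : ℚ_[p]).valuation) := by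
          rw [← h2'', h1, mul_assoc, ← zpow_add₀ hp0]
          simp
        rw [this, hk]
        rw [mul_pow, ← zpow_natCast ((p : ℚ_[p]) ^ k) 2, ← zpow_mul]
        ring_nf
      have hwne : (z : ℚ_[p]) * (p : ℚ_[p]) ^ k ≠ 0 := by
        intro h
        apply hxne x
        rw [hxval, h]; ring
      refine ⟨Units.mk0 ((z : ℚ_[p]) * (p : ℚ_[p]) ^ k) hwne, ?_⟩
      apply Units.ext
      rw [Units.val_pow_eq_pow_val, Units.val_mk0, ← hxval]
    · rintro ⟨y, rfl⟩
      rw [map_pow]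
      apply Prod.ext
      · show ((Φ y).1) ^ 2 = 1
        have : (Φ y).1 = Multiplicative.ofAdd (((y : ℚ_[p]).valuation : ZMod 2)) := rfl
        rw [this, ← ofAdd_nsmul]
        have : (2 : ℕ) • (((y : ℚ_[p]).valuation : ZMod 2)) = 0 := by
          rw [two_smul]
          exact CharTwo.add_self_eq_zero _
        rw [this]; rfl
      · show ((Φ y).2) ^ 2 = 1
        exact Int.units_sq _
  -- surjectivity
  have hpu : ((p : ℚ_[p])) ≠ 0 := hp0
  let pu : (ℚ_[p])ˣ := Units.mk0 (p : ℚ_[p]) hp0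
  have hvpu : (Φ pu).1 = Multiplicative.ofAdd ((1 : ZMod 2)) := by
    show Multiplicative.ofAdd (((pu : ℚ_[p]).valuation : ZMod 2)) = _
    have : (pu : ℚ_[p]) = (p : ℚ_[p]) := rfl
    rw [this, Padic.valuation_p]
    norm_num
  -- a nonsquare unit
  obtain ⟨b, hb⟩ := FiniteField.exists_nonsquare (F := ZMod p)
    (by rw [ZMod.ringChar_zmod_n]; exact hp2)
  have hb0 : b ≠ 0 := by rintro rfl; exact hb ⟨0, by ring⟩
  have hbvp : ¬ (p ∣ b.val) := by
    intro h
    have : ((b.val : ℕ) : ZMod p) = 0 := (ZMod.natCast_eq_zero_iff _ _).mpr h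
    rw [ZMod.natCast_val, ZMod.cast_id] at this
    exact hb0 this
  have hnb : ((b.val : ℕ) : ℚ_[p]) ≠ 0 := by
    have : b.val ≠ 0 := by
      intro h; apply hbvp; rw [h]; exact dvd_zero p
    exact_mod_cast Nat.cast_ne_zero.mpr this
  let nu : (ℚ_[p])ˣ := Units.mk0 ((b.val : ℕ) : ℚ_[p]) hnb
  have hvnu : ((nu : ℚ_[p])).valuation = 0 := by
    show ((b.val : ℕ) : ℚ_[p]).valuation = 0
    rw [Padic.valuation_natCast, padicValNat.eq_zero_of_not_dvd hbvp]
    rfl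
  have hvnu1 : (Φ nu).1 = 1 := by
    show Multiplicative.ofAdd (((nu : ℚ_[p]).valuation : ZMod 2)) = 1
    rw [hvnu]
    norm_num
  have hupnu : up nu = ((b.val : ℕ) : ℤ_[p]) := by
    apply Subtype.ext
    show ((nu : ℚ_[p])) * (p : ℚ_[p]) ^ (-(nu : ℚ_[p]).valuation) = (((b.val : ℕ) : ℤ_[p]) : ℚ_[p])
    rw [hvnu]
    push_cast
    simp
    exact ZMod.natCast_val b
  have hχnu : χ nu = b := by
    rw [hχ, hupnu, map_natCast, ZMod.natCast_val, ZMod.cast_id]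
  have hΦnu2 : (Φ nu).2 = -1 := by
    apply Units.ext
    rw [hΦ2' nu, hχnu]
    have := (quadraticChar_neg_one_iff_not_isSquare (a := b)).mpr hb
    rw [this]; rfl
  have hsurj : Function.Surjective Φ := by
    rintro ⟨a, t⟩
    -- first fix the first coordinate
    set c : ℕ := (Multiplicative.toAdd a).val with hc
    have hcy : (Φ (pu ^ c)).1 = a := by
      rw [map_pow]
      show ((Φ pu).1) ^ c = a
      rw [hvpu, ← ofAdd_nsmul]
      have : c • (1 : ZMod 2) = Multiplicative.toAdd a := by
        rw [nsmul_eq_mul, mul_one, hc, ZMod.natCast_val, ZMod.cast_id]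
      rw [this]
      exact ofAdd_toAdd a
    by_cases ht : (Φ (pu ^ c)).2 = t
    · exact ⟨pu ^ c, Prod.ext hcy ht⟩
    · refine ⟨pu ^ c * nu, ?_⟩
      rw [map_mul]
      apply Prod.ext
      · show (Φ (pu ^ c)).1 * (Φ nu).1 = a
        rw [hvnu1, mul_one, hcy]
      · show (Φ (pu ^ c)).2 * (Φ nu).2 = t
        rw [hΦnu2]
        rcases Int.units_eq_one_or ((Φ (pu ^ c)).2) with h | h <;>
          rcases Int.units_eq_one_or t with h' | h' <;>
          simp_all
  -- conclude
  rw [← hker]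
  have := Nat.card_congr (QuotientGroup.quotientKerEquivOfSurjective Φ hsurj).toEquiv
  rw [this]
  rw [Nat.card_prod]
  simp [Nat.card_eq_fintype_card]
end

section
/- The quotient group ℚ₂ˣ / (ℚ₂ˣ)², where (ℚ₂ˣ)² is the range of the squaring homomorphism x ↦ x² on the units of the 2-adic numbers, has exactly 8 elements. -/
open Padic PadicInt

noncomputable section Aux6

/-- the unit part of a 2-adic unit -/
noncomputable def uPart (x : (ℚ_[2])ˣ) : ℤ_[2]ˣ :=
  PadicInt.mkUnits (u := (x : ℚ_[2]) * (2 : ℚ_[2]) ^ (-(x : ℚ_[2]).valuation)) <| by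
    have hx : (x : ℚ_[2]) ≠ 0 := x.ne_zero
    rw [_root_.norm_mul, Padic.norm_eq_zpow_neg_valuation hx]
    have : ‖(2 : ℚ_[2]) ^ (-(x : ℚ_[2]).valuation)‖ = (2:ℝ) ^ ((x : ℚ_[2]).valuation) := by
      have := Padic.norm_p_zpow (p := 2) (-(x : ℚ_[2]).valuation)
      simpa using this
    rw [this]
    push_cast
    rw [← zpow_add₀ (by norm_num : (2:ℝ) ≠ 0)]
    simp

lemma uPart_coe (x : (ℚ_[2])ˣ) :
    ((uPart x : ℤ_[2]) : ℚ_[2]) = (x : ℚ_[2]) * (2 : ℚ_[2]) ^ (-(x : ℚ_[2]).valuation) := rfl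

lemma uPart_spec (x : (ℚ_[2])ˣ) :
    (x : ℚ_[2]) = (2 : ℚ_[2]) ^ ((x : ℚ_[2]).valuation) * ((uPart x : ℤ_[2]) : ℚ_[2]) := by
  rw [uPart_coe, ← mul_assoc, mul_comm ((2:ℚ_[2]) ^ _), mul_assoc,
    ← zpow_add₀ (by norm_num : (2:ℚ_[2]) ≠ 0)]
  simp

lemma uPart_mul (x y : (ℚ_[2])ˣ) : uPart (x * y) = uPart x * uPart y := by
  have hx : (x : ℚ_[2]) ≠ 0 := x.ne_zero
  have hy : (y : ℚ_[2]) ≠ 0 := y.ne_zero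
  apply Units.ext
  apply Subtype.ext
  simp only [Units.val_mul, PadicInt.coe_mul, uPart_coe,
    Padic.valuation_mul hx hy, neg_add,
    zpow_add₀ (by norm_num : (2:ℚ_[2]) ≠ 0)]
  ring

noncomputable def phi6 : (ℚ_[2])ˣ →* Multiplicative (ZMod 2) × (ZMod (2^3))ˣ where
  toFun x := (Multiplicative.ofAdd (((x : ℚ_[2]).valuation : ZMod 2)),
    Units.map (PadicInt.toZModPow 3).toMonoidHom (uPart x))
  map_one' := by
    have h1 : ((1 : (ℚ_[2])ˣ) : ℚ_[2]) = 1 := rfl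
    have hu : uPart 1 = 1 := by
      apply Units.ext; apply Subtype.ext
      simp [uPart_coe, h1, Padic.valuation_one]
    simp [hu, h1, Padic.valuation_one]
  map_mul' x y := by
    have hx : (x : ℚ_[2]) ≠ 0 := x.ne_zero
    have hy : (y : ℚ_[2]) ≠ 0 := y.ne_zero
    refine Prod.ext ?_ ?_
    · show Multiplicative.ofAdd _ = Multiplicative.ofAdd _ * Multiplicative.ofAdd _
      rw [← ofAdd_add, Units.val_mul, Padic.valuation_mul hx hy]
      push_cast
      rfl
    · show Units.map _ (uPart (x * y)) = Units.map _ (uPart x) * Units.map _ (uPart y)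
      rw [uPart_mul, map_mul]

lemma exists_sq6 (z : ℤ_[2]) (hz : PadicInt.toZModPow 3 z = 1) :
    ∃ w : ℤ_[2], w ^ 2 = z := by
  have hmem : z - 1 ∈ RingHom.ker (toZModPow (p := 2) 3) := by
    rw [RingHom.mem_ker, map_sub, map_one, hz, sub_self]
  rw [PadicInt.ker_toZModPow, Ideal.mem_span_singleton] at hmem
  obtain ⟨c, hc⟩ := hmem
  have hnorm1 : ‖z - 1‖ ≤ (8:ℝ)⁻¹ := by
    rw [hc]
    calc ‖(2:ℤ_[2]) ^ 3 * c‖ = ‖(2:ℤ_[2]) ^ 3‖ * ‖c‖ := norm_mul _ _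
    _ ≤ ‖(2:ℤ_[2]) ^ 3‖ * 1 := by
        exact mul_le_mul_of_nonneg_left (PadicInt.norm_le_one c) (norm_nonneg _)
    _ = (8:ℝ)⁻¹ := by
        rw [mul_one]
        have : ((2:ℕ) : ℤ_[2]) = (2 : ℤ_[2]) := by norm_num
        rw [← this, PadicInt.norm_p_pow (p := 2) 3]
        norm_num
  set F : Polynomial ℤ_[2] := Polynomial.X ^ 2 - Polynomial.C z with hF
  have heval : F.eval 1 = 1 - z := by simp [hF]
  have hderiv : F.derivative.eval 1 = 2 := by
    simp [hF, Polynomial.derivative_X_pow, one_add_one_eq_two]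
  have hnorm : ‖F.eval 1‖ < ‖F.derivative.eval 1‖ ^ 2 := by
    rw [heval, hderiv]
    have h2 : ‖(2:ℤ_[2])‖ = (2:ℝ)⁻¹ := by
      have : ((2:ℕ) : ℤ_[2]) = (2 : ℤ_[2]) := by norm_num
      rw [← this, PadicInt.norm_p]; norm_num
    have : ‖(1:ℤ_[2]) - z‖ = ‖z - 1‖ := by rw [← norm_neg]; ring_nf
    rw [this, h2]
    calc ‖z - 1‖ ≤ (8:ℝ)⁻¹ := hnorm1
    _ < ((2:ℝ)⁻¹) ^ 2 := by norm_num
  obtain ⟨w, hw, -⟩ := hensels_lemma (p := 2) (F := F) (a := 1) hnorm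
  refine ⟨w, ?_⟩
  have : w ^ 2 - z = 0 := by simpa [hF] using hw
  exact sub_eq_zero.mp this

lemma ker_le_range6 (x : (ℚ_[2])ˣ) (hx : phi6 x = 1) :
    x ∈ MonoidHom.range (powMonoidHom (α := (ℚ_[2])ˣ) 2) := by
  have h1 : (((x : ℚ_[2]).valuation : ZMod 2)) = 0 := by
    have h := congrArg Prod.fst hx
    simpa [phi6] using h
  have h2 : PadicInt.toZModPow 3 ((uPart x : ℤ_[2])) = 1 := by
    have h := congrArg Units.val (congrArg Prod.snd hx)
    simpa [phi6] using h
  obtain ⟨w, hw⟩ := exists_sq6 _ h2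
  have hdvd : ((2:ℕ):ℤ) ∣ (x : ℚ_[2]).valuation :=
    (ZMod.intCast_zmod_eq_zero_iff_dvd _ 2).mp h1
  obtain ⟨k, hk⟩ := hdvd
  have hwu : IsUnit w := by
    have hu : IsUnit (w * w) := by
      rw [← sq, hw]; exact (uPart x).isUnit
    exact isUnit_of_mul_isUnit_left hu
  refine ⟨(Units.mk0 (2:ℚ_[2]) two_ne_zero) ^ k *
    Units.map (PadicInt.Coe.ringHom (p := 2)).toMonoidHom hwu.unit, ?_⟩
  apply Units.ext
  show ((((Units.mk0 (2:ℚ_[2]) two_ne_zero) ^ k *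
    Units.map (PadicInt.Coe.ringHom (p := 2)).toMonoidHom hwu.unit) ^ 2 : (ℚ_[2])ˣ) : ℚ_[2])
    = (x : ℚ_[2])
  rw [mul_pow, Units.val_mul]
  have e1 : ((((Units.mk0 (2:ℚ_[2]) two_ne_zero) ^ k) ^ 2 : (ℚ_[2])ˣ) : ℚ_[2])
      = (2:ℚ_[2]) ^ (2 * k) := by
    rw [Units.val_pow_eq_pow_val, Units.val_zpow_eq_zpow_val, Units.val_mk0,
      ← zpow_natCast ((2:ℚ_[2]) ^ k) 2, ← zpow_mul]
    norm_num [mul_comm]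
  have e2 : (((Units.map (PadicInt.Coe.ringHom (p := 2)).toMonoidHom hwu.unit) ^ 2 : (ℚ_[2])ˣ) : ℚ_[2])
      = ((w ^ 2 : ℤ_[2]) : ℚ_[2]) := by
    rw [Units.val_pow_eq_pow_val, Units.coe_map, IsUnit.unit_spec]
    rfl
  rw [e1, e2, hw, uPart_spec x, hk]
  ring_nf

lemma phi6_surj : Function.Surjective phi6 := by
  rintro ⟨e, u⟩
  set n : ℕ := (u : ZMod (2^3)).val with hn
  have hco : Nat.Coprime n (2^3) := ZMod.val_coe_unit_coprime u
  have hodd : ¬ (2 ∣ n) := by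
    intro h
    have h8 : (2:ℕ) ∣ 2^3 := ⟨4, rfl⟩
    have := Nat.dvd_gcd h h8
    rw [Nat.Coprime] at hco
    rw [hco] at this
    omega
  have hn0 : n ≠ 0 := by
    intro h
    exact hodd (by rw [h]; exact ⟨0, rfl⟩)
  set a : ℕ := (Multiplicative.toAdd e).val with ha
  have hqn0 : ((n : ℚ_[2])) ≠ 0 := Nat.cast_ne_zero.2 hn0
  have hp0 : ((2:ℚ_[2]) ^ a) ≠ 0 := pow_ne_zero _ two_ne_zero
  have hx0 : (2:ℚ_[2])^a * (n:ℚ_[2]) ≠ 0 := mul_ne_zero hp0 hqn0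
  have hval : ((2:ℚ_[2])^a * (n:ℚ_[2])).valuation = a := by
    rw [Padic.valuation_mul hp0 hqn0]
    have hcast : ((2:ℚ_[2])^a) = ((2^a : ℕ) : ℚ_[2]) := by push_cast; ring
    have h1 : ((2:ℚ_[2])^a).valuation = a := by
      rw [hcast, Padic.valuation_natCast, padicValNat.prime_pow]
    have h2 : ((n:ℚ_[2])).valuation = 0 := by
      rw [Padic.valuation_natCast, padicValNat.eq_zero_of_not_dvd hodd]
      rfl
    rw [h1, h2, add_zero]
  refine ⟨Units.mk0 _ hx0, ?_⟩
  have huc : ((uPart (Units.mk0 _ hx0) : ℤ_[2]) : ℚ_[2]) = (n : ℚ_[2]) := by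
    rw [uPart_coe, Units.val_mk0, hval, mul_comm ((2:ℚ_[2])^a), mul_assoc,
      ← zpow_natCast (2:ℚ_[2]) a, ← zpow_add₀ (two_ne_zero)]
    simp
  have huval : (uPart (Units.mk0 _ hx0) : ℤ_[2]) = (n : ℤ_[2]) := by
    apply Subtype.ext
    rw [huc]
    simp
  refine Prod.ext ?_ ?_
  · show Multiplicative.ofAdd (((Units.mk0 _ hx0 : (ℚ_[2])ˣ) : ℚ_[2]).valuation : ZMod 2) = e
    rw [Units.val_mk0, hval]
    have : ((a : ℤ) : ZMod 2) = Multiplicative.toAdd e := by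
      push_cast
      rw [ha, ZMod.natCast_zmod_val]
    rw [this]
    rfl
  · show Units.map (PadicInt.toZModPow 3).toMonoidHom (uPart (Units.mk0 _ hx0)) = u
    apply Units.ext
    rw [Units.coe_map]
    show (PadicInt.toZModPow 3) ((uPart (Units.mk0 _ hx0) : ℤ_[2])) = (u : ZMod (2^3))
    rw [huval, map_natCast, hn, ZMod.natCast_zmod_val]

end Aux6

/-- The quotient group `ℚ₂ˣ/(ℚ₂ˣ)²` has exactly 8 elements. -/
theorem stmt_6 :
    Nat.card ((ℚ_[2])ˣ ⧸ MonoidHom.range (powMonoidHom (α := (ℚ_[2])ˣ) 2)) = 8 := by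
  have hexp : ∀ g : Multiplicative (ZMod 2) × (ZMod (2^3))ˣ, g ^ 2 = 1 := by decide
  have hker : MonoidHom.range (powMonoidHom (α := (ℚ_[2])ˣ) 2) = phi6.ker := by
    apply le_antisymm
    · rintro _ ⟨y, rfl⟩
      rw [MonoidHom.mem_ker]
      show phi6 (y ^ 2) = 1
      rw [map_pow]
      exact hexp _
    · intro x hx
      exact ker_le_range6 x (MonoidHom.mem_ker.mp hx)
  rw [hker,
    Nat.card_congr (QuotientGroup.quotientKerEquivOfSurjective phi6 phi6_surj).toEquiv,
    Nat.card_eq_fintype_card]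
  rfl
end

section
/- Let K be a finite field of odd characteristic and F = LaurentSeries K the field K((X)) of formal Laurent series over K (a local field of characteristic p ≠ 2). Then the quotient group Fˣ / (Fˣ)², where (Fˣ)² is the range of the squaring homomorphism x ↦ x² on Fˣ, has exactly 4 elements. -/
open PowerSeries Finset HahnSeries

noncomputable def psSqrtAux {K : Type*} [Field K] (f : PowerSeries K) : ℕ → K
  | 0 => 1
  | (n+1) => (PowerSeries.coeff (n+1) f -
      ∑ i ∈ (Finset.Ioo 0 (n+1)).attach, psSqrtAux f i.1 * psSqrtAux f (n+1 - i.1)) / 2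
  termination_by n => n
  decreasing_by
  · exact (Finset.mem_Ioo.mp i.2).2
  · have h := Finset.mem_Ioo.mp i.2; omega

theorem psSqrt_mul_self {K : Type*} [Field K] (h2 : (2 : K) ≠ 0) (f : PowerSeries K)
    (hf : PowerSeries.constantCoeff f = 1) :
    PowerSeries.mk (psSqrtAux f) * PowerSeries.mk (psSqrtAux f) = f := by
  ext n
  rw [PowerSeries.coeff_mul]
  cases n with
  | zero =>
    simp [Finset.Nat.antidiagonal_zero, psSqrtAux, PowerSeries.coeff_zero_eq_constantCoeff, hf]
  | succ n =>
    rw [Finset.Nat.sum_antidiagonal_eq_sum_range_succ_mk]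
    simp only [PowerSeries.coeff_mk]
    rw [Finset.sum_range_succ, Finset.sum_range_succ']
    have hS : ∑ i ∈ (Finset.Ioo 0 (n+1)).attach,
        psSqrtAux f i.1 * psSqrtAux f (n+1 - i.1)
        = ∑ i ∈ Finset.range n, psSqrtAux f (i+1) * psSqrtAux f (n+1-(i+1)) := by
      rw [Finset.sum_attach (Finset.Ioo 0 (n+1)) (fun i => psSqrtAux f i * psSqrtAux f (n+1-i))]
      rw [← Finset.Ico_add_one_left_eq_Ioo, Finset.sum_Ico_eq_sum_range]
      simp [add_comm 1]
    have hc : psSqrtAux f (n+1) = (PowerSeries.coeff (n+1) f -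
        ∑ i ∈ Finset.range n, psSqrtAux f (i+1) * psSqrtAux f (n+1-(i+1))) / 2 := by
      rw [psSqrtAux, hS]
    have h0 : psSqrtAux f 0 = 1 := by rw [psSqrtAux]
    rw [h0, Nat.sub_zero, Nat.sub_self, h0, hc]
    field_simp
    ring

theorem laurent_leadingCoeff_mul {K : Type*} [Field K] {x y : LaurentSeries K}
    (hx : x ≠ 0) (hy : y ≠ 0) :
    (x * y).leadingCoeff = x.leadingCoeff * y.leadingCoeff := by
  rw [HahnSeries.leadingCoeff_eq, HahnSeries.order_mul hx hy,
    HahnSeries.coeff_mul_order_add_order]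

/-- order mod 2 as a monoid hom on units of Laurent series. -/
noncomputable def lsOrdHom (K : Type*) [Field K] :
    (LaurentSeries K)ˣ →* Multiplicative (ZMod 2) where
  toFun u := Multiplicative.ofAdd ((u.val.order : ZMod 2))
  map_one' := by
    simp [Units.val_one, HahnSeries.order_one]
  map_mul' u v := by
    have h := HahnSeries.order_mul (x := u.val) (y := v.val) u.ne_zero v.ne_zero
    simp only [Units.val_mul, h]
    push_cast
    rw [ofAdd_add]

/-- leading coefficient as a monoid hom on units of Laurent series. -/
noncomputable def lsLcHom (K : Type*) [Field K] : (LaurentSeries K)ˣ →* Kˣ where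
  toFun u := Units.mk0 u.val.leadingCoeff (HahnSeries.leadingCoeff_ne_zero.mpr u.ne_zero)
  map_one' := by
    ext
    simp [Units.val_one, HahnSeries.leadingCoeff_one]
  map_mul' u v := by
    ext
    simp [Units.val_mul, laurent_leadingCoeff_mul u.ne_zero v.ne_zero]

/-- the combined character of Laurent series units. -/
noncomputable def lsChar (K : Type*) [Field K] :
    (LaurentSeries K)ˣ →* Multiplicative (ZMod 2) × (Kˣ ⧸ (powMonoidHom (α := Kˣ) 2).range) :=
  (lsOrdHom K).prod ((QuotientGroup.mk' _).comp (lsLcHom K))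

/-- For a finite field `K` of odd characteristic and `F = K((X))`, the quotient group
`Fˣ/(Fˣ)²` has exactly 4 elements. -/
theorem stmt_7 (K : Type*) [Field K] [Fintype K] (hK : Odd (ringChar K)) :
    Nat.card ((LaurentSeries K)ˣ ⧸
      MonoidHom.range (powMonoidHom (α := (LaurentSeries K)ˣ) 2)) = 4 := by
  classical
  -- 2 ≠ 0 in K
  have h2 : (2 : K) ≠ 0 := by
    intro h
    have hd : ringChar K ∣ 2 := by
      rw [← ringChar.spec K 2]
      push_cast
      exact h
    obtain ⟨k, hk⟩ := hK
    have hle := Nat.le_of_dvd two_pos hd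
    have h1 : ringChar K = 1 := by omega
    have := CharP.ringChar_ne_one (R := K)
    exact this h1
  -- target group
  set Q := Kˣ ⧸ (powMonoidHom (α := Kˣ) 2).range with hQ
  set H := Multiplicative (ZMod 2) × Q with hH
  -- every square in H is trivial
  have h4 : ∀ h : H, h ^ 2 = 1 := by
    rintro ⟨a, b⟩
    have ha : a ^ 2 = 1 := by
      revert a; decide
    obtain ⟨c, rfl⟩ := QuotientGroup.mk_surjective b
    have hb : (QuotientGroup.mk c : Q) ^ 2 = 1 := by
      rw [← QuotientGroup.mk_pow, QuotientGroup.eq_one_iff]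
      exact ⟨c, rfl⟩
    rw [Prod.ext_iff, Prod.pow_fst, Prod.pow_snd]
    exact ⟨ha, hb⟩
  -- kernel of lsChar = squares
  have hker : (lsChar K).ker = (powMonoidHom (α := (LaurentSeries K)ˣ) 2).range := by
    ext u
    constructor
    · intro hu
      rw [MonoidHom.mem_ker] at hu
      have h1 : (u.val.order : ZMod 2) = 0 := by
        have := congrArg Prod.fst hu
        simpa [lsChar, lsOrdHom, MonoidHom.prod_apply] using this
      have h2' : (lsLcHom K u) ∈ (powMonoidHom (α := Kˣ) 2).range := by
        have h := congrArg Prod.snd hu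
        rw [← QuotientGroup.eq_one_iff]
        simpa [lsChar, MonoidHom.prod_apply] using h
      obtain ⟨c, hc⟩ := h2'
      rw [powMonoidHom_apply] at hc
      obtain ⟨n, hn⟩ : (2 : ℤ) ∣ u.val.order :=
        (ZMod.intCast_zmod_eq_zero_iff_dvd _ 2).mp h1
      have hlc : u.val.leadingCoeff = (c : K) ^ 2 := by
        have h := congrArg Units.val hc
        simpa [lsLcHom] using h.symm
      set p := u.val.powerSeriesPart with hp
      have hp0 : PowerSeries.constantCoeff p = u.val.leadingCoeff := by
        rw [← PowerSeries.coeff_zero_eq_constantCoeff_apply, hp,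
          LaurentSeries.powerSeriesPart_coeff]
        simp [HahnSeries.leadingCoeff_eq]
      have hcne : (c : K) ≠ 0 := Units.ne_zero c
      set p' := PowerSeries.C (((c : K)⁻¹) ^ 2) * p with hp'
      have hp'0 : PowerSeries.constantCoeff p' = 1 := by
        rw [hp', map_mul, hp0, hlc, PowerSeries.constantCoeff_C]
        field_simp
      set g := PowerSeries.mk (psSqrtAux p') with hg
      have hgg : g * g = p' := psSqrt_mul_self h2 p' hp'0
      have hcg : (PowerSeries.C (c : K) * g) * (PowerSeries.C (c : K) * g) = p := by
        rw [mul_mul_mul_comm, hgg, hp', ← mul_assoc, ← map_mul, ← map_mul]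
        have : (c : K) * (c : K) * ((c : K)⁻¹) ^ 2 = 1 := by field_simp
        rw [this, map_one, one_mul]
      set w : LaurentSeries K :=
        HahnSeries.single n 1 * (HahnSeries.ofPowerSeries ℤ K (PowerSeries.C (c : K) * g))
        with hw
      have hww : w * w = u.val := by
        rw [hw, mul_mul_mul_comm, HahnSeries.single_mul_single, one_mul, ← map_mul, hcg]
        have hnn : n + n = u.val.order := by omega
        rw [hnn]
        exact u.val.single_order_mul_powerSeriesPart
      have hwne : w ≠ 0 := by
        intro h
        apply u.ne_zero
        rw [← hww, h, mul_zero]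
      refine ⟨Units.mk0 w hwne, ?_⟩
      refine Units.ext ?_
      rw [powMonoidHom_apply, Units.val_pow_eq_pow_val, Units.val_mk0, sq]
      exact hww
    · rintro ⟨v, rfl⟩
      rw [MonoidHom.mem_ker, powMonoidHom_apply, map_pow]
      exact h4 _
  -- surjectivity of lsChar
  have hsurj : Function.Surjective (lsChar K) := by
    rintro ⟨a, b⟩
    obtain ⟨c, rfl⟩ := QuotientGroup.mk_surjective b
    refine ⟨⟨HahnSeries.single ((a.toAdd.val : ℕ) : ℤ) (c : K),
      HahnSeries.single (-((a.toAdd.val : ℕ) : ℤ)) ((c⁻¹ : Kˣ) : K), ?_, ?_⟩, ?_⟩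
    · rw [HahnSeries.single_mul_single, add_neg_cancel]
      norm_cast
      rw [mul_inv_cancel, Units.val_one, HahnSeries.single_zero_one]
    · rw [HahnSeries.single_mul_single, neg_add_cancel]
      norm_cast
      rw [inv_mul_cancel, Units.val_one, HahnSeries.single_zero_one]
    · have hcne : (c : K) ≠ 0 := Units.ne_zero c
      rw [Prod.ext_iff]
      constructor
      · show Multiplicative.ofAdd (((HahnSeries.single ((a.toAdd.val : ℕ) : ℤ) (c : K)).order :
          ZMod 2)) = a
        rw [HahnSeries.order_single hcne]
        have : (((a.toAdd.val : ℕ) : ℤ) : ZMod 2) = a.toAdd := by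
          push_cast
          simp [ZMod.natCast_val, ZMod.cast_id]
        rw [this]
        rfl
      · show QuotientGroup.mk (lsLcHom K _) = QuotientGroup.mk c
        congr 1
        ext
        show (HahnSeries.single ((a.toAdd.val : ℕ) : ℤ) (c : K)).leadingCoeff = (c : K)
        exact HahnSeries.leadingCoeff_of_single
  -- card of kernel of squaring on Kˣ is 2
  have hne : (1 : Kˣ) ≠ -1 := by
    intro h
    apply h2
    have h' := congrArg Units.val h
    rw [Units.val_one, Units.val_neg, Units.val_one] at h'
    linear_combination h'
  have hkerK : Nat.card ((powMonoidHom (α := Kˣ) 2).ker) = 2 := by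
    have hset : ((powMonoidHom (α := Kˣ) 2).ker : Set Kˣ) = {1, -1} := by
      ext x
      simp only [SetLike.mem_coe, MonoidHom.mem_ker, powMonoidHom_apply,
        Set.mem_insert_iff, Set.mem_singleton_iff]
      constructor
      · intro h
        have hx : (x : K) * (x : K) = 1 := by
          have := congrArg Units.val h
          rw [Units.val_pow_eq_pow_val, Units.val_one, sq] at this
          exact this
        rcases mul_self_eq_one_iff.mp hx with h' | h'
        · left; ext; simpa using h'
        · right; ext; simpa using h'
      · rintro (rfl | rfl)
        · exact one_pow 2
        · exact neg_one_sq
    rw [← SetLike.coe_sort_coe, hset, Nat.card_coe_set_eq, Set.ncard_pair hne]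
  -- card of Q is 2
  have hcard1 : Nat.card Kˣ = Nat.card Q * Nat.card (powMonoidHom (α := Kˣ) 2).range :=
    Subgroup.card_eq_card_quotient_mul_card_subgroup _
  have hcard2 : Nat.card Kˣ = Nat.card (powMonoidHom (α := Kˣ) 2).range * 2 := by
    rw [Subgroup.card_eq_card_quotient_mul_card_subgroup (powMonoidHom (α := Kˣ) 2).ker,
      Nat.card_congr (QuotientGroup.quotientKerEquivRange (powMonoidHom (α := Kˣ) 2)).toEquiv,
      hkerK]
  have hrpos : 0 < Nat.card (powMonoidHom (α := Kˣ) 2).range := Nat.card_pos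
  have hQ2 : Nat.card Q = 2 := by
    have heq : Nat.card (powMonoidHom (α := Kˣ) 2).range * Nat.card Q =
        Nat.card (powMonoidHom (α := Kˣ) 2).range * 2 := by
      rw [mul_comm, ← hcard1, hcard2]
    exact Nat.eq_of_mul_eq_mul_left hrpos heq
  rw [← hker,
    Nat.card_congr (QuotientGroup.quotientKerEquivOfSurjective (lsChar K) hsurj).toEquiv,
    Nat.card_prod, hQ2]
  simp [Nat.card_eq_fintype_card]
end

section
/- Let O be a discrete valuation ring with irreducible element (uniformizer) ϖ, and let R be a commutative O-algebra that is free as an O-module with basis (1, τ). Let A be an O-subalgebra of R that is not contained in the image of O in R. Then there exists a unique natural number m such that A, as an O-submodule of R, equals the O-span of {1, ϖ^m • τ}. (Classification of the O-orders in a quadratic extension: each order is O + ϖ^m τ O for a unique m ∈ ℕ.) -/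
/-!
The second coordinate `b.coord 1` sends an `O`-submodule `N ∋ 1` of `R` to an ideal of `O`, and
`N` is recovered from it: if the ideal is `(g)`, then `N = O + O·gτ`, and conversely
`O + O·gτ` has ideal `(g)`. For a subalgebra not contained in `O` the ideal is nonzero, so in the
DVR `O` it is `(ϖ^m)` for exactly one `m`.
-/

namespace Module.Basis

variable {O M : Type*} [CommRing O] [AddCommGroup M] [Module O M]

theorem map_coord_one_span_pair (b : Basis (Fin 2) O M) (g : O) :
    (Submodule.span O {b 0, g • b 1}).map (b.coord 1) = Ideal.span {g} := by
  rw [Submodule.map_span, Set.image_pair]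
  simp [Set.pair_comm (0 : O)]

theorem eq_span_pair_of_map_coord_one (b : Basis (Fin 2) O M) {N : Submodule O M}
    (h0 : b 0 ∈ N) {g : O} (hN : N.map (b.coord 1) = Ideal.span {g}) :
    N = Submodule.span O {b 0, g • b 1} := by
  have hsum (x : M) : b.repr x 0 • b 0 + b.repr x 1 • b 1 = x := by
    simpa only [Fin.sum_univ_two] using b.sum_repr x
  apply le_antisymm
  · intro x hx
    obtain ⟨d, hd⟩ := Ideal.mem_span_singleton'.mp (hN ▸ Submodule.mem_map_of_mem hx)
    rw [Submodule.mem_span_pair]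
    refine ⟨b.repr x 0, d, ?_⟩
    rw [smul_smul, hd, Basis.coord_apply, hsum]
  · rw [Submodule.span_le, Set.insert_subset_iff, Set.singleton_subset_iff]
    refine ⟨h0, ?_⟩
    obtain ⟨y, hy, hyg⟩ := hN.symm ▸ Ideal.mem_span_singleton_self g
    rw [Basis.coord_apply] at hyg
    have : g • b 1 = y - b.repr y 0 • b 0 := by
      rw [eq_sub_iff_add_eq, add_comm, ← hyg, hsum]
    rw [this]
    exact N.sub_mem hy (N.smul_mem _ h0)

end Module.Basis

theorem Irreducible.span_pow_injective {O : Type*} [CommRing O] [IsDomain O]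
    [IsDiscreteValuationRing O] {ϖ : O} (hϖ : Irreducible ϖ) {m n : ℕ}
    (h : Ideal.span {ϖ ^ m} = Ideal.span {ϖ ^ n}) : m = n := by
  have hassoc := Ideal.span_singleton_eq_span_singleton.mp h
  exact le_antisymm ((pow_dvd_pow_iff hϖ.ne_zero hϖ.not_isUnit).mp hassoc.dvd)
    ((pow_dvd_pow_iff hϖ.ne_zero hϖ.not_isUnit).mp hassoc.dvd')

/-- Classification of the `O`-orders in a quadratic extension: every `O`-subalgebra of `R`
not contained in (the image of) `O` is of the form `O + O·ϖ^m τ` for a unique `m : ℕ`. -/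
theorem stmt_8 (O R : Type*) [CommRing O] [IsDomain O] [IsDiscreteValuationRing O]
    [CommRing R] [Algebra O R] (ϖ : O) (hϖ : Irreducible ϖ)
    (τ : R) (b : Module.Basis (Fin 2) O R) (hb0 : b 0 = 1) (hb1 : b 1 = τ)
    (A : Subalgebra O R) (hA : ¬ A ≤ ⊥) :
    ∃! m : ℕ, Subalgebra.toSubmodule A =
      Submodule.span O {(1 : R), ϖ ^ m • τ} := by
  subst hb1
  set I : Ideal O := (Subalgebra.toSubmodule A).map (b.coord 1)
  have h0 : b 0 ∈ Subalgebra.toSubmodule A := hb0 ▸ A.one_mem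
  have hI : I ≠ ⊥ := by
    intro hI
    rw [← Ideal.span_zero, ← Set.singleton_zero] at hI
    apply hA
    rw [← Subalgebra.toSubmodule.le_iff_le, b.eq_span_pair_of_map_coord_one h0 hI,
      Algebra.toSubmodule_bot, Submodule.one_eq_span, hb0, zero_smul, Set.pair_comm,
      Submodule.span_insert_zero]
  obtain ⟨m, hm⟩ := IsDiscreteValuationRing.ideal_eq_span_pow_irreducible hI hϖ
  refine ⟨m, hb0 ▸ b.eq_span_pair_of_map_coord_one h0 hm, fun n hn => ?_⟩
  have hIn := b.map_coord_one_span_pair (ϖ ^ n)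
  rw [hb0, ← hn] at hIn
  exact hϖ.span_pow_injective (hIn.symm.trans hm)
end

section
/- Let p be a prime. For every g ∈ SL(2, ℚ_p) there exist a ∈ ℚ_pˣ, n ∈ ℚ_p and k ∈ SL(2, ℤ_p) such that g = !![a, n; 0, a⁻¹] · k (with k viewed in SL(2, ℚ_p) via the inclusion ℤ_p → ℚ_p); moreover, for any such decomposition, ‖a‖ = (max ‖g 1 0‖ ‖g 1 1‖)⁻¹, where (g 1 0, g 1 1) is the bottom row of g and ‖·‖ is the p-adic norm. (Iwasawa decomposition of SL(2, ℚ_p) and the formula for the height function H_P.) -/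
set_option linter.unreachableTactic false
set_option linter.unusedTactic false
set_option linter.unnecessarySeqFocus false

/-- The bottom row of an element of `SL(2, ℤ_p)` has norm-max equal to `1`. -/
lemma aux_max_one (p : ℕ) [Fact p.Prime] (k : Matrix.SpecialLinearGroup (Fin 2) ℤ_[p]) :
    max ‖((k : Matrix (Fin 2) (Fin 2) ℤ_[p]) 1 0 : ℤ_[p])‖
      ‖((k : Matrix (Fin 2) (Fin 2) ℤ_[p]) 1 1 : ℤ_[p])‖ = 1 := by
  set k00 := (k : Matrix (Fin 2) (Fin 2) ℤ_[p]) 0 0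
  set k01 := (k : Matrix (Fin 2) (Fin 2) ℤ_[p]) 0 1
  set k10 := (k : Matrix (Fin 2) (Fin 2) ℤ_[p]) 1 0
  set k11 := (k : Matrix (Fin 2) (Fin 2) ℤ_[p]) 1 1
  have hdet : k00 * k11 - k01 * k10 = 1 := by
    have := k.2
    rw [Matrix.det_fin_two] at this
    exact this
  apply le_antisymm
  · exact max_le k10.norm_le_one k11.norm_le_one
  · calc (1:ℝ) = ‖k00 * k11 - k01 * k10‖ := by rw [hdet]; simp
      _ ≤ max ‖k00 * k11‖ ‖k01 * k10‖ := by
          simpa [sub_eq_add_neg] using PadicInt.nonarchimedean (k00 * k11) (-(k01 * k10))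
      _ ≤ max ‖k10‖ ‖k11‖ := by
          apply max_le
          · refine le_trans ?_ (le_max_right _ _)
            calc ‖k00 * k11‖ ≤ ‖k00‖ * ‖k11‖ := norm_mul_le _ _
              _ ≤ 1 * ‖k11‖ := by gcongr; exact k00.norm_le_one
              _ = ‖k11‖ := one_mul _
          · refine le_trans ?_ (le_max_left _ _)
            calc ‖k01 * k10‖ ≤ ‖k01‖ * ‖k10‖ := norm_mul_le _ _
              _ ≤ 1 * ‖k10‖ := by gcongr; exact k01.norm_le_one
              _ = ‖k10‖ := one_mul _

def mkZp (p : ℕ) [Fact p.Prime] (x : ℚ_[p]) (h : ‖x‖ ≤ 1) : ℤ_[p] := ⟨x, h⟩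

@[simp] lemma mkZp_coe (p : ℕ) [Fact p.Prime] (x : ℚ_[p]) (h : ‖x‖ ≤ 1) :
    ((mkZp p x h : ℤ_[p]) : ℚ_[p]) = x := rfl

@[simp] lemma map_val_apply (p : ℕ) [Fact p.Prime] (M : Matrix (Fin 2) (Fin 2) ℤ_[p]) (i j : Fin 2) :
    M.map ((↑) : ℤ_[p] → ℚ_[p]) i j = (M i j : ℚ_[p]) := rfl

/-- Iwasawa decomposition of `SL(2, ℚ_p)`: every `g` factors as an upper triangular matrix
`!![a, n; 0, a⁻¹]` times an element of `SL(2, ℤ_p)`, and in any such decomposition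
`‖a‖ = (max ‖g 1 0‖ ‖g 1 1‖)⁻¹`. -/
theorem stmt_10 (p : ℕ) [Fact p.Prime] (g : Matrix.SpecialLinearGroup (Fin 2) ℚ_[p]) :
    (∃ (a : (ℚ_[p])ˣ) (n : ℚ_[p]) (k : Matrix.SpecialLinearGroup (Fin 2) ℤ_[p]),
        (↑g : Matrix (Fin 2) (Fin 2) ℚ_[p]) =
          !![(a : ℚ_[p]), n; 0, (a : ℚ_[p])⁻¹] *
            (↑k : Matrix (Fin 2) (Fin 2) ℤ_[p]).map ((↑) : ℤ_[p] → ℚ_[p])) ∧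
      ∀ (a : (ℚ_[p])ˣ) (n : ℚ_[p]) (k : Matrix.SpecialLinearGroup (Fin 2) ℤ_[p]),
        (↑g : Matrix (Fin 2) (Fin 2) ℚ_[p]) =
            !![(a : ℚ_[p]), n; 0, (a : ℚ_[p])⁻¹] *
              (↑k : Matrix (Fin 2) (Fin 2) ℤ_[p]).map ((↑) : ℤ_[p] → ℚ_[p]) →
          ‖(a : ℚ_[p])‖ = (max ‖(↑g : Matrix (Fin 2) (Fin 2) ℚ_[p]) 1 0‖
            ‖(↑g : Matrix (Fin 2) (Fin 2) ℚ_[p]) 1 1‖)⁻¹ := by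
  constructor
  · -- Existence of the decomposition
    set α := (g : Matrix (Fin 2) (Fin 2) ℚ_[p]) 0 0 with hα
    set β := (g : Matrix (Fin 2) (Fin 2) ℚ_[p]) 0 1 with hβ
    set γ := (g : Matrix (Fin 2) (Fin 2) ℚ_[p]) 1 0 with hγ
    set δ := (g : Matrix (Fin 2) (Fin 2) ℚ_[p]) 1 1 with hδ
    have hdet : α * δ - β * γ = 1 := by
      have := g.2; rw [Matrix.det_fin_two] at this; exact this
    have hg : (g : Matrix (Fin 2) (Fin 2) ℚ_[p]) = !![α, β; γ, δ] := by
      rw [hα, hβ, hγ, hδ]; exact (Matrix.etaExpand_eq _).symm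
    by_cases h : ‖γ‖ ≤ ‖δ‖
    · have hδ0 : δ ≠ 0 := by
        intro h0
        have hγ0 : γ = 0 := by
          have := h; rw [h0, norm_zero] at this
          exact norm_eq_zero.mp (le_antisymm this (norm_nonneg _))
        rw [h0, hγ0] at hdet; simp at hdet
      have hc : ‖γ / δ‖ ≤ 1 := by
        rw [norm_div]
        exact div_le_one_of_le₀ h (norm_nonneg _)
      refine ⟨Units.mk0 δ⁻¹ (inv_ne_zero hδ0), β,
        ⟨!![(1 : ℤ_[p]), 0; mkZp p (γ / δ) hc, 1], by simp [Matrix.det_fin_two_of]⟩, ?_⟩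
      rw [hg]
      ext i j
      fin_cases i <;> fin_cases j <;>
        simp [Matrix.mul_apply, Fin.sum_univ_two, Units.val_mk0] <;>
        field_simp <;>
        first
          | linear_combination hdet
          | linear_combination -hdet
          | linear_combination 2*hdet
          | linear_combination -2*hdet
          | ring
    · push_neg at h
      have hγ0 : γ ≠ 0 := by
        intro h0; rw [h0, norm_zero] at h
        exact absurd (norm_nonneg δ) (not_le.mpr h)
      have hc : ‖δ / γ‖ ≤ 1 := by
        rw [norm_div]
        exact div_le_one_of_le₀ h.le (norm_nonneg _)
      refine ⟨Units.mk0 γ⁻¹ (inv_ne_zero hγ0), α,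
        ⟨!![(0 : ℤ_[p]), -1; 1, mkZp p (δ / γ) hc], by simp [Matrix.det_fin_two_of]⟩, ?_⟩
      rw [hg]
      ext i j
      fin_cases i <;> fin_cases j <;>
        simp [Matrix.mul_apply, Fin.sum_univ_two, Units.val_mk0] <;>
        field_simp <;>
        first
          | linear_combination hdet
          | linear_combination -hdet
          | linear_combination 2*hdet
          | linear_combination -2*hdet
          | ring
  · -- Norm formula
    intro a n k heq
    have h10 : (g : Matrix (Fin 2) (Fin 2) ℚ_[p]) 1 0
        = (a : ℚ_[p])⁻¹ * ((k : Matrix (Fin 2) (Fin 2) ℤ_[p]) 1 0 : ℤ_[p]) := by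
      have := congrFun (congrFun heq 1) 0
      simpa [Matrix.mul_apply, Fin.sum_univ_two] using this
    have h11 : (g : Matrix (Fin 2) (Fin 2) ℚ_[p]) 1 1
        = (a : ℚ_[p])⁻¹ * ((k : Matrix (Fin 2) (Fin 2) ℤ_[p]) 1 1 : ℤ_[p]) := by
      have := congrFun (congrFun heq 1) 1
      simpa [Matrix.mul_apply, Fin.sum_univ_two] using this
    have hmax : max ‖(g : Matrix (Fin 2) (Fin 2) ℚ_[p]) 1 0‖
        ‖(g : Matrix (Fin 2) (Fin 2) ℚ_[p]) 1 1‖ = ‖(a : ℚ_[p])‖⁻¹ := by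
      rw [h10, h11, norm_mul, norm_mul, norm_inv,
        ← mul_max_of_nonneg _ _ (by positivity : (0:ℝ) ≤ ‖(a : ℚ_[p])‖⁻¹),
        ← PadicInt.norm_def, ← PadicInt.norm_def, aux_max_one, mul_one]
    rw [hmax, inv_inv]
end

section
/- Every g ∈ GL(2, ℝ) can be written as g = s · d · k, where s is an invertible matrix of the form !![x, −y; y, x] with (x, y) ≠ (0, 0) (the image of a nonzero complex number under the standard embedding ℂˣ → GL(2, ℝ)), d = !![μ, 0; 0, 1] with μ a real number satisfying μ ≥ 1, and k belongs to the orthogonal group O(2, ℝ) of 2×2 real matrices preserving the Euclidean norm. (Cartan-type decomposition GL(2, ℝ) = ℂˣ · A₊ · K.) -/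
lemma exists_rot (A B : ℝ) : ∃ u v : ℝ, u^2 + v^2 = 1 ∧ B*(u^2 - v^2) = A*(u*v) := by
  by_cases h : (Complex.mk B (A/2)) = 0
  · refine ⟨1, 0, by norm_num, ?_⟩
    have hB : B = 0 := congrArg Complex.re h
    simp [hB]
  · set ζ : ℂ := Complex.mk B (A/2) with hζ
    obtain ⟨w, hw⟩ := IsAlgClosed.exists_pow_nat_eq
      (Complex.I * (starRingEnd ℂ ζ) / (‖ζ‖ : ℝ)) two_pos
    have habs : (‖ζ‖ : ℝ) ≠ 0 := by simpa using h
    have habs1 : ‖w ^ 2‖ = 1 := by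
      rw [hw]
      rw [norm_div, norm_mul]
      simp [habs]
    have hnorm : w.re ^ 2 + w.im ^ 2 = 1 := by
      have : ‖w‖ ^ 2 = 1 := by rw [← habs1, norm_pow]
      have h2 := Complex.sq_norm w
      rw [this] at h2
      rw [Complex.normSq_apply] at h2
      nlinarith [h2]
    have hre0 : (w ^ 2 * ζ).re = 0 := by
      rw [hw, div_mul_eq_mul_div, mul_assoc, Complex.conj_mul']
      simp [Complex.div_re]
      exact Or.inl (by rw [← Complex.ofReal_pow]; exact Complex.ofReal_im _)
    refine ⟨w.re, w.im, hnorm, ?_⟩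
    have h1 : (w ^ 2).re = w.re ^ 2 - w.im ^ 2 := by
      rw [pow_two, Complex.mul_re]; ring
    have h2 : (w ^ 2).im = 2 * (w.re * w.im) := by
      rw [pow_two, Complex.mul_im]; ring
    have h3 : (w ^ 2 * ζ).re = (w ^ 2).re * B - (w ^ 2).im * (A / 2) := by
      rw [Complex.mul_re]
    rw [hre0, h1, h2] at h3
    linarith

lemma key (p q r t : ℝ) (h1 : p*q + r*t = 0) (h2 : 0 < p*t - q*r)
    (h3 : q^2 + t^2 ≤ p^2 + r^2) :
    ∃ x y : ℝ, (x,y) ≠ (0,0) ∧ ∃ μ : ℝ, 1 ≤ μ ∧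
      !![p,q;r,t] = !![x,-y;y,x] * !![μ,0;0,1] := by
  have hqt : 0 < q^2 + t^2 := by
    rcases lt_or_eq_of_le (by positivity : (0:ℝ) ≤ q^2 + t^2) with h | h
    · exact h
    · exfalso
      have hq : q = 0 := by nlinarith [sq_nonneg q, sq_nonneg t]
      have ht : t = 0 := by nlinarith [sq_nonneg q, sq_nonneg t]
      rw [hq, ht] at h2; nlinarith
  set μ : ℝ := (p*t - q*r)/(q^2 + t^2) with hμdef
  have hμpos : 0 < μ := div_pos h2 hqt
  have hp : p = μ * t := by
    rw [hμdef]; field_simp; linear_combination q * h1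
  have hr : r = -(μ * q) := by
    rw [hμdef]; field_simp; linear_combination t * h1
  have hsum : p^2 + r^2 = μ^2 * (q^2 + t^2) := by rw [hp, hr]; ring
  have hμsq : 1 ≤ μ^2 := by
    have h4 : 1 * (q^2+t^2) ≤ μ^2 * (q^2+t^2) := by rw [one_mul, ← hsum]; exact h3
    exact le_of_mul_le_mul_right h4 hqt
  have hμ1 : 1 ≤ μ := by nlinarith [hμsq, hμpos]
  refine ⟨t, -q, ?_, μ, hμ1, ?_⟩
  · intro hc
    rw [Prod.mk.injEq] at hc
    obtain ⟨ht, hq⟩ := hc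
    have hq' : q = 0 := by linarith [neg_eq_zero.mp hq]
    rw [ht, hq'] at hqt; norm_num at hqt
  · rw [Matrix.mul_fin_two]
    ext i j
    fin_cases i <;> fin_cases j <;> simp <;> linarith [hp, hr]

lemma assemble (G R R' J N : Matrix (Fin 2) (Fin 2) ℝ)
    (hR : R * R' = 1) (hJ : J * J = 1) (hstar : star (R' * J) = J * R)
    (hN0 : G * J * R = N)
    (h : ∃ x y : ℝ, (x,y) ≠ (0,0) ∧ ∃ μ : ℝ, 1 ≤ μ ∧ N = !![x,-y;y,x] * !![μ,0;0,1]) :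
    ∃ x y : ℝ, (x,y) ≠ (0,0) ∧ ∃ μ : ℝ, 1 ≤ μ ∧
      ∃ k ∈ Matrix.orthogonalGroup (Fin 2) ℝ,
        G = !![x,-y;y,x] * !![μ,0;0,1] * k := by
  obtain ⟨x, y, hxy, μ, hμ, hN⟩ := h
  refine ⟨x, y, hxy, μ, hμ, R' * J, ?_, ?_⟩
  · rw [Matrix.mem_orthogonalGroup_iff, ← Matrix.conjTranspose_eq_transpose_of_trivial, ← Matrix.star_eq_conjTranspose, hstar]
    have hR' : R' * R = 1 := mul_eq_one_comm.mp hR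
    calc R' * J * (J * R) = R' * (J * J) * R := by
          simp only [mul_assoc]
      _ = R' * R := by rw [hJ, mul_one]
      _ = 1 := hR'
  · rw [← hN, ← hN0]
    symm
    calc G * J * R * (R' * J) = G * (J * (R * R' * J)) := by simp only [mul_assoc]
      _ = G * (J * J) := by rw [hR, one_mul]
      _ = G := by rw [hJ, mul_one]

/-- Cartan-type decomposition `GL(2, ℝ) = ℂˣ · A₊ · K`: every invertible real 2×2 matrix is
a product of the image `!![x, -y; y, x]` of a nonzero complex number, a diagonal matrix
`!![μ, 0; 0, 1]` with `μ ≥ 1`, and an orthogonal matrix. -/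
theorem stmt_11 (g : Matrix.GeneralLinearGroup (Fin 2) ℝ) :
    ∃ (x y : ℝ), (x, y) ≠ (0, 0) ∧ ∃ (μ : ℝ), 1 ≤ μ ∧
      ∃ k ∈ Matrix.orthogonalGroup (Fin 2) ℝ,
        (↑g : Matrix (Fin 2) (Fin 2) ℝ) = !![x, -y; y, x] * !![μ, 0; 0, 1] * k := by
  set G : Matrix (Fin 2) (Fin 2) ℝ := (↑g : Matrix (Fin 2) (Fin 2) ℝ) with hGdef
  obtain ⟨a, b, c, d, hG⟩ : ∃ a b c d : ℝ, G = !![a,b;c,d] :=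
    ⟨G 0 0, G 0 1, G 1 0, G 1 1, Matrix.eta_fin_two G⟩
  have hdet : a * d - b * c ≠ 0 := by
    have hu : IsUnit G.det := (Matrix.isUnit_iff_isUnit_det G).mp g.isUnit
    rw [hG, Matrix.det_fin_two_of] at hu
    exact isUnit_iff_ne_zero.mp hu
  obtain ⟨σ, hσ, hdet'⟩ : ∃ σ : ℝ, σ * σ = 1 ∧ 0 < (a*d - b*c) * σ := by
    rcases lt_trichotomy (a*d - b*c) 0 with h | h | h
    · exact ⟨-1, by norm_num, by nlinarith⟩
    · exact absurd h hdet
    · exact ⟨1, by norm_num, by nlinarith⟩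
  obtain ⟨u, v, huv, hrot⟩ := exists_rot
    (a^2 + c^2 - (σ*b)^2 - (σ*d)^2) (a*(σ*b) + c*(σ*d))
  set p : ℝ := a*u + σ*b*v with hpd
  set q : ℝ := σ*b*u - a*v with hqd
  set r : ℝ := c*u + σ*d*v with hrd
  set t : ℝ := σ*d*u - c*v with htd
  have hJ : (!![1,0;0,σ] : Matrix (Fin 2) (Fin 2) ℝ) * !![1,0;0,σ] = 1 := by
    ext i j
    fin_cases i <;> fin_cases j <;> simp [Matrix.mul_apply, Fin.sum_univ_two, hσ]
  have h1 : p*q + r*t = 0 := by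
    rw [hpd, hqd, hrd, htd]
    linear_combination hrot
  have h2 : 0 < p*t - q*r := by
    have e : p*t - q*r = (a*d - b*c) * σ := by
      rw [hpd, hqd, hrd, htd]
      linear_combination ((a*d - b*c)*σ) * huv
    rw [e]; exact hdet'
  rcases le_or_gt (q^2 + t^2) (p^2 + r^2) with hcmp | hcmp
  · refine assemble G !![u,-v;v,u] !![u,v;-v,u] !![1,0;0,σ] !![p,q;r,t] ?_ hJ ?_ ?_
      (key p q r t h1 h2 hcmp)
    · ext i j
      fin_cases i <;> fin_cases j <;>
        simp [Matrix.mul_apply, Fin.sum_univ_two] <;> (first | tauto | exact Or.inl (by ring) | ring1 | linear_combination huv | linear_combination -huv)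
    · rw [Matrix.star_eq_conjTranspose]
      ext i j
      fin_cases i <;> fin_cases j <;>
        simp [Matrix.mul_apply, Fin.sum_univ_two] <;> (first | tauto | exact Or.inl (by ring) | ring1 | linear_combination huv | linear_combination -huv)
    · rw [hG]
      ext i j
      fin_cases i <;> fin_cases j <;>
        simp [Matrix.mul_apply, Fin.sum_univ_two, hpd, hqd, hrd, htd] <;> (first | tauto | exact Or.inl (by ring) | ring1 | linear_combination huv | linear_combination -huv | linear_combination σ*huv | linear_combination (-σ)*huv)
  · have h1' : q*(-p) + t*(-r) = 0 := by linear_combination -h1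
    have h2' : 0 < q*(-r) - (-p)*t := by nlinarith [h2]
    have h3' : (-p)^2 + (-r)^2 ≤ q^2 + t^2 := by nlinarith [hcmp]
    refine assemble G !![-v,-u;u,-v] !![-v,u;-u,-v] !![1,0;0,σ] !![q,-p;t,-r] ?_ hJ ?_ ?_
      (key q (-p) t (-r) h1' h2' h3')
    · ext i j
      fin_cases i <;> fin_cases j <;>
        simp [Matrix.mul_apply, Fin.sum_univ_two] <;> (first | tauto | exact Or.inl (by ring) | ring1 | linear_combination huv | linear_combination -huv)
    · rw [Matrix.star_eq_conjTranspose]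
      ext i j
      fin_cases i <;> fin_cases j <;>
        simp [Matrix.mul_apply, Fin.sum_univ_two] <;> (first | tauto | exact Or.inl (by ring) | ring1 | linear_combination huv | linear_combination -huv)
    · rw [hG]
      ext i j
      fin_cases i <;> fin_cases j <;>
        simp [Matrix.mul_apply, Fin.sum_univ_two, hpd, hqd, hrd, htd] <;> (first | tauto | exact Or.inl (by ring) | ring1 | linear_combination huv | linear_combination -huv | linear_combination σ*huv | linear_combination (-σ)*huv)
end
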